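/- arXiv:1407.4666 — 12 statements merged into one kernel-verified Lean document; each statement's English description precedes it below -/
import Mathlib

section
/- Let n ≥ 1, let S be a Sperner family on {1,…,n} with Sperner statistic H_S and module h_S. Then H_S is a conservative statistic with module h_S: for every Borel probability measure μ on ℝ and every t ∈ ℝ, letting μ^n denote the n-fold product measure on ℝ^n, one has μ^n({x ∈ ℝ^n : H_S(x) ≤ t}) = h_S(μ((−∞, t])). -/
open MeasureTheory

/-- The Sperner statistic of a family `S` of subsets of `{1,…,n}`:
`H_S(x) = max_{A ∈ S} min_{i ∈ A} x_i`. -/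
noncomputable def spernerStat {n : ℕ} (S : Finset (Finset (Fin n))) (hS : S.Nonempty)
    (hne : ∀ A ∈ S, A.Nonempty) (x : Fin n → ℝ) : ℝ :=
  S.attach.sup' (Finset.attach_nonempty_iff.mpr hS)
    (fun A => A.1.inf' (hne A.1 A.2) x)

/- The module of a Sperner family:
`h_S(t) = Σ_{ε ∈ {0,1}^n, H_S(ε)=0} t^{z(ε)} (1−t)^{n−z(ε)}`, where `z(ε)` is the
number of zero coordinates of `ε`. -/
open scoped Classical in
noncomputable def spernerModule {n : ℕ} (S : Finset (Finset (Fin n))) (hS : S.Nonempty)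
    (hne : ∀ A ∈ S, A.Nonempty) (t : ℝ) : ℝ :=
  ∑ ε : Fin n → Bool,
    if spernerStat S hS hne (fun i => if ε i then 1 else 0) = 0 then
      t ^ (Finset.univ.filter fun i => ε i = false).card *
        (1 - t) ^ (n - (Finset.univ.filter fun i => ε i = false).card)
    else 0

/-!
Whether `H_S(x) ≤ t` depends only on which coordinates of `x` exceed `t`: it holds iff every
`A ∈ S` meets `{i | x i ≤ t}`, i.e. iff `H_S` vanishes at the 0/1 pattern `ε_i = [t < x_i]`.
Hence the level set is the disjoint union, over the patterns `ε` with `H_S(ε) = 0`, of the boxes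
`∏ i, (if ε i then (t, ∞) else (-∞, t])`, and the box of `ε` has `μ^n`-measure
`p ^ z(ε) * (1 - p) ^ (n - z(ε))` with `p = μ (-∞, t]`.
-/

open Finset

section

variable {n : ℕ} (S : Finset (Finset (Fin n))) (hS : S.Nonempty) (hne : ∀ A ∈ S, A.Nonempty)

theorem spernerStat_le_iff (x : Fin n → ℝ) (t : ℝ) :
    spernerStat S hS hne x ≤ t ↔ ∀ A ∈ S, ∃ i ∈ A, x i ≤ t := by
  simp [spernerStat, Finset.sup'_le_iff, Finset.inf'_le_iff]

theorem spernerStat_nonneg {x : Fin n → ℝ} (hx : 0 ≤ x) : 0 ≤ spernerStat S hS hne x := by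
  obtain ⟨A, hA⟩ := hS
  exact Finset.le_sup'_of_le _ (Finset.mem_attach _ ⟨A, hA⟩)
    (Finset.le_inf' _ _ fun i _ => hx i)

theorem spernerStat_boolIndicator_eq_zero_iff (ε : Fin n → Bool) :
    spernerStat S hS hne (fun i => if ε i then 1 else 0) = 0 ↔
      ∀ A ∈ S, ∃ i ∈ A, ε i = false := by
  rw [← (spernerStat_nonneg S hS hne fun i => by positivity).ge_iff_eq', spernerStat_le_iff]
  have hind : ∀ b : Bool, (if b then (1 : ℝ) else 0) ≤ 0 ↔ b = false := by
    intro b; cases b <;> norm_num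
  simp only [hind]

noncomputable def exceedPattern {ι : Type*} (t : ℝ) (x : ι → ℝ) : ι → Bool :=
  fun i => decide (t < x i)

theorem spernerStat_le_iff_exceedPattern (x : Fin n → ℝ) (t : ℝ) :
    spernerStat S hS hne x ≤ t ↔
      spernerStat S hS hne (fun i => if exceedPattern t x i then 1 else 0) = 0 := by
  rw [spernerStat_le_iff, spernerStat_boolIndicator_eq_zero_iff S hS hne (exceedPattern t x)]
  simp [exceedPattern]

end

theorem exceedPattern_preimage_singleton {ι : Type*} (t : ℝ) (ε : ι → Bool) :
    exceedPattern t ⁻¹' {ε} = Set.univ.pi fun i => if ε i then Set.Ioi t else Set.Iic t := by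
  ext x
  simp only [Set.mem_preimage, Set.mem_singleton_iff, funext_iff, Set.mem_univ_pi]
  refine forall_congr' fun i => ?_
  cases ε i <;> simp [exceedPattern]

theorem measureReal_ite_Ioi_Iic (μ : Measure ℝ) [IsProbabilityMeasure μ] (t : ℝ) (b : Bool) :
    μ.real (if b then Set.Ioi t else Set.Iic t) =
      if b then 1 - μ.real (Set.Iic t) else μ.real (Set.Iic t) := by
  cases b
  · rfl
  · rw [if_pos rfl, if_pos rfl, ← Set.compl_Iic, probReal_compl_eq_one_sub measurableSet_Iic]

theorem Fintype.prod_bool_ite {ι M : Type*} [Fintype ι] [CommMonoid M] (ε : ι → Bool)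
    (a b : M) :
    ∏ i, (if ε i then a else b) =
      b ^ #{i | ε i = false} * a ^ (Fintype.card ι - #{i | ε i = false}) := by
  have hcard : #{i | ε i = true} = Fintype.card ι - #{i | ε i = false} := by
    refine Nat.eq_sub_of_add_eq' ?_
    simpa using card_filter_add_card_filter_not (s := univ) fun i => ε i = false
  rw [Finset.prod_ite, prod_const, prod_const, mul_comm, hcard]
  simp

theorem sperner_statistic_is_conservative_general
    (n : ℕ) (S : Finset (Finset (Fin n))) (hS : S.Nonempty)
    (hne : ∀ A ∈ S, A.Nonempty)
    (μ : Measure ℝ) [IsProbabilityMeasure μ] (t : ℝ) :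
    ((Measure.pi fun _ : Fin n => μ) {x | spernerStat S hS hne x ≤ t}).toReal =
      spernerModule S hS hne (μ (Set.Iic t)).toReal := by
  classical
  let good : Finset (Fin n → Bool) :=
    {ε | spernerStat S hS hne (fun i => if ε i then 1 else 0) = 0}
  have hlevel : {x | spernerStat S hS hne x ≤ t} = exceedPattern t ⁻¹' ↑good := by
    ext x
    simp [good, spernerStat_le_iff_exceedPattern]
  have hfiber : ∀ ε, MeasurableSet (exceedPattern t ⁻¹' {ε}) := fun ε : Fin n → Bool => by
    rw [exceedPattern_preimage_singleton]
    exact .univ_pi fun i => by cases ε i <;> simp [measurableSet_Ioi, measurableSet_Iic]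
  rw [hlevel, ← sum_measure_preimage_singleton good fun ε _ => hfiber ε,
    ENNReal.toReal_sum fun ε _ => measure_ne_top _ _, spernerModule, ← Finset.sum_filter]
  refine Finset.sum_congr rfl fun ε _ => ?_
  rw [exceedPattern_preimage_singleton, Measure.pi_pi, ENNReal.toReal_prod]
  simp_rw [← measureReal_def, measureReal_ite_Ioi_Iic]
  rw [Fintype.prod_bool_ite, Fintype.card_fin]

/-- A Sperner statistic is a conservative statistic with module `h_S`. -/
theorem sperner_statistic_is_conservative
    (n : ℕ) (hn : 1 ≤ n) (S : Finset (Finset (Fin n))) (hS : S.Nonempty)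
    (hne : ∀ A ∈ S, A.Nonempty) (hsp : ∀ A ∈ S, ∀ B ∈ S, A ⊆ B → A = B)
    (μ : Measure ℝ) [IsProbabilityMeasure μ] (t : ℝ) :
    ((Measure.pi fun _ : Fin n => μ) {x | spernerStat S hS hne x ≤ t}).toReal =
      spernerModule S hS hne (μ (Set.Iic t)).toReal :=
  sperner_statistic_is_conservative_general n S hS hne μ t
end

section
/- Let n ≥ 1 and let S be a Sperner family on {1,…,n} with module h_S. Then for every t ∈ ℝ, h_S(t) = Σ_{T ⊆ S} (−1)^{|T|} (1 − t)^{|⋃_{A ∈ T} A|}, where the summand for T = ∅ equals 1; equivalently, h_S(t) = 1 − Σ_i (1 − t)^{|A_i|} + Σ_{i<j} (1 − t)^{|A_i ∪ A_j|} − ⋯ over the members A_1,…,A_k of S. -/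
open MeasureTheory

/-!
Writing `Z` for the zero set of `ε`, the condition `H_S(ε) = 0` says that `Z` meets every
member of `S`, so `h_S(t)` is the sum of `t ^ |Z| * (1 - t) ^ (n - |Z|)` over the transversals
`Z` of `S`. Inclusion–exclusion over the events "`Z` misses `A`", `A ∈ S`, turns this into an
alternating sum, over `T ⊆ S`, of sums over the `Z` disjoint from `⋃ T`; by the binomial theorem
each of those equals `(1 - t) ^ |⋃ T|`.
-/

open Finset

section Transversals

variable {ι R : Type*} [Fintype ι] [DecidableEq ι] [CommRing R]

theorem sum_powerset_compl_pow_mul_one_sub_pow (U : Finset ι) (t : R) :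
    ∑ Z ∈ Uᶜ.powerset, t ^ #Z * (1 - t) ^ (Fintype.card ι - #Z) = (1 - t) ^ #U := by
  calc ∑ Z ∈ Uᶜ.powerset, t ^ #Z * (1 - t) ^ (Fintype.card ι - #Z)
      = ∑ Z ∈ Uᶜ.powerset, (1 - t) ^ #U * (t ^ #Z * (1 - t) ^ (#Uᶜ - #Z)) := by
        refine sum_congr rfl fun Z hZ => ?_
        have hZU : #Z ≤ #Uᶜ := card_le_card (mem_powerset.mp hZ)
        rw [card_compl] at hZU ⊢
        rw [mul_left_comm, ← pow_add]
        congr 3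
        have := card_le_univ U
        omega
    _ = (1 - t) ^ #U := by
        rw [← mul_sum, sum_pow_mul_eq_add_pow, add_sub_cancel, one_pow, mul_one]

theorem inf_powerset_compl_eq_powerset_compl_biUnion (T : Finset (Finset ι)) :
    T.inf (fun A => Aᶜ.powerset) = (T.biUnion id)ᶜ.powerset := by
  ext Z
  simp [mem_inf, subset_compl_iff_disjoint_right, disjoint_biUnion_right]

theorem sum_transversals_eq_sum_powerset (S : Finset (Finset ι)) (t : R) :
    ∑ Z with ∀ A ∈ S, ¬Disjoint A Z, t ^ #Z * (1 - t) ^ (Fintype.card ι - #Z) =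
      ∑ T ∈ S.powerset, (-1) ^ #T * (1 - t) ^ #(T.biUnion id) := by
  have htrans : ({Z | ∀ A ∈ S, ¬Disjoint A Z} : Finset (Finset ι)) =
      S.inf fun A => (Aᶜ.powerset)ᶜ := by
    ext Z
    simp [mem_inf, subset_compl_iff_disjoint_left]
  rw [htrans, inclusion_exclusion_sum_inf_compl]
  refine sum_congr rfl fun T _ => ?_
  rw [inf_powerset_compl_eq_powerset_compl_biUnion, sum_powerset_compl_pow_mul_one_sub_pow,
    zsmul_eq_mul, Int.cast_pow, Int.cast_neg, Int.cast_one]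

end Transversals

theorem spernerStat_eq_zero_iff {n : ℕ} (S : Finset (Finset (Fin n))) (hS : S.Nonempty)
    (hne : ∀ A ∈ S, A.Nonempty) {x : Fin n → ℝ} (hx : 0 ≤ x) :
    spernerStat S hS hne x = 0 ↔ ∀ A ∈ S, ∃ i ∈ A, x i = 0 := by
  have hinf : ∀ A (hA : A ∈ S), 0 ≤ A.inf' (hne A hA) x := fun A hA =>
    le_inf' _ _ fun i _ => hx i
  have hstat : 0 ≤ spernerStat S hS hne x := by
    obtain ⟨A, hA⟩ := hS
    exact le_sup'_of_le _ (mem_attach _ ⟨A, hA⟩) (hinf A hA)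
  rw [← hstat.ge_iff_eq', spernerStat, sup'_le_iff]
  have hzero : ∀ i, x i ≤ 0 ↔ x i = 0 := fun i => (hx i).ge_iff_eq'
  simp only [mem_attach, true_implies, Subtype.forall, inf'_le_iff, hzero]

theorem spernerModule_eq_sum_transversals {n : ℕ} (S : Finset (Finset (Fin n)))
    (hS : S.Nonempty) (hne : ∀ A ∈ S, A.Nonempty) (t : ℝ) :
    spernerModule S hS hne t =
      ∑ Z with ∀ A ∈ S, ¬Disjoint A Z, t ^ #Z * (1 - t) ^ (n - #Z) := by
  rw [sum_filter, spernerModule]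
  refine sum_nbij' (fun ε => ({i | ε i = false} : Finset (Fin n))) (fun Z i => decide (i ∉ Z))
    (by simp) (by simp) (fun ε _ => by ext i; simp) (fun Z _ => by ext i; simp) fun ε _ => ?_
  refine if_congr ?_ rfl rfl
  rw [spernerStat_eq_zero_iff S hS hne fun i => by positivity]
  simp [not_disjoint_iff]

theorem sperner_module_inclusion_exclusion_general
    (n : ℕ) (S : Finset (Finset (Fin n))) (hS : S.Nonempty)
    (hne : ∀ A ∈ S, A.Nonempty) (t : ℝ) :
    spernerModule S hS hne t =
      ∑ T ∈ S.powerset, (-1 : ℝ) ^ T.card * (1 - t) ^ (T.biUnion id).card := by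
  rw [spernerModule_eq_sum_transversals, ← sum_transversals_eq_sum_powerset, Fintype.card_fin]

/-- Inclusion–exclusion formula for the module of a Sperner family:
`h_S(t) = Σ_{T ⊆ S} (−1)^{|T|} (1−t)^{|⋃_{A ∈ T} A|}`. -/
theorem sperner_module_inclusion_exclusion
    (n : ℕ) (hn : 1 ≤ n) (S : Finset (Finset (Fin n))) (hS : S.Nonempty)
    (hne : ∀ A ∈ S, A.Nonempty) (hsp : ∀ A ∈ S, ∀ B ∈ S, A ⊆ B → A = B) (t : ℝ) :
    spernerModule S hS hne t =
      ∑ T ∈ S.powerset, (-1 : ℝ) ^ T.card * (1 - t) ^ (T.biUnion id).card :=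
  sperner_module_inclusion_exclusion_general n S hS hne t
end

section
/- Let n ≥ 1 and let H : ℝ^n → ℝ be a Borel measurable conservative statistic. Then H satisfies the selecting property: H(x_1, …, x_n) ∈ {x_1, …, x_n} for every (x_1, …, x_n) ∈ ℝ^n. -/
/-!
If `H x` is none of the coordinates `x i`, pick `t < H x` such that no `x i` lies in `(t, H x]`.
For the empirical measure `μ` of the `x i`, `μ (Iic t) = μ (Iic (H x))`, so conservativity forces
`μⁿ {H ≤ t} = μⁿ {H ≤ H x}`. But the point `x` is an atom of `μⁿ` lying in the second set and
not in the first.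
-/

open MeasureTheory Set ENNReal
open scoped Finset

theorem exists_lt_forall_notMem_Ioc {ι α : Type*} [Finite ι] [LinearOrder α] [NoMinOrder α]
    {x : ι → α} {c : α} (hx : ∀ i, x i ≠ c) : ∃ t < c, ∀ i, x i ∉ Ioc t c := by
  classical
  have := Fintype.ofFinite ι
  obtain ⟨t₀, ht₀⟩ := exists_lt c
  let s : Finset α := insert t₀ ((Finset.univ.filter fun i => x i < c).image x)
  have hs : ∀ a ∈ s, a < c := by simp [s, ht₀]
  have hne : s.Nonempty := Finset.insert_nonempty _ _
  refine ⟨s.max' hne, hs _ (s.max'_mem hne), fun i ⟨hlt, hle⟩ => ?_⟩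
  have hxi : x i ∈ s :=
    Finset.mem_insert_of_mem (Finset.mem_image_of_mem x (by simp [hle.lt_of_ne (hx i)]))
  exact (hlt.trans_le (s.le_max' _ hxi)).false

theorem measure_lt_measure_of_mem_diff {β : Type*} [MeasurableSpace β]
    [MeasurableSingletonClass β] {ν : Measure β} [IsFiniteMeasure ν] {s u : Set β} {x : β}
    (hsu : s ⊆ u) (hx : x ∈ u \ s) (hatom : ν {x} ≠ 0) : ν s < ν u :=
  calc ν s < ν s + ν {x} := ENNReal.lt_add_right (measure_ne_top ν s) hatom
    _ = ν (insert x s) := by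
      rw [insert_eq, measure_union' (disjoint_singleton_left.2 hx.2) (measurableSet_singleton x),
        add_comm]
    _ ≤ ν u := measure_mono (insert_subset hx.1 hsu)

noncomputable def empiricalMeasure {ι α : Type*} [Fintype ι] [MeasurableSpace α] (x : ι → α) :
    Measure α :=
  (Fintype.card ι : ℝ≥0∞)⁻¹ • ∑ i, Measure.dirac (x i)

section empiricalMeasure

variable {ι α : Type*} [Fintype ι] [MeasurableSpace α] [MeasurableSingletonClass α]

open Classical in
theorem empiricalMeasure_apply (x : ι → α) (s : Set α) :
    empiricalMeasure x s = (Fintype.card ι : ℝ≥0∞)⁻¹ * #{i | x i ∈ s} := by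
  simp [empiricalMeasure, Measure.dirac_apply, indicator_apply, Finset.sum_boole]

instance [Nonempty ι] (x : ι → α) : IsProbabilityMeasure (empiricalMeasure x) :=
  ⟨by simp [empiricalMeasure_apply, ENNReal.inv_mul_cancel]⟩

theorem empiricalMeasure_congr (x : ι → α) {s t : Set α}
    (hst : ∀ i, x i ∈ s ↔ x i ∈ t) : empiricalMeasure x s = empiricalMeasure x t := by
  classical
  rw [empiricalMeasure_apply, empiricalMeasure_apply, Finset.filter_congr fun i _ => hst i]

theorem empiricalMeasure_singleton_ne_zero (x : ι → α) (i : ι) :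
    empiricalMeasure x {x i} ≠ 0 := by
  classical
  rw [empiricalMeasure_apply]
  refine mul_ne_zero (by simp) ?_
  exact_mod_cast (Finset.card_ne_zero.2 ⟨i, by simp⟩)

end empiricalMeasure

theorem conservative_implies_selecting_general
    (n : ℕ) (hn : 1 ≤ n) (H : (Fin n → ℝ) → ℝ) (h : ℝ → ℝ)
    (hcons : ∀ μ : Measure ℝ, IsProbabilityMeasure μ → ∀ t : ℝ,
      ((Measure.pi fun _ : Fin n => μ) {x | H x ≤ t}).toReal = h (μ (Set.Iic t)).toReal) :
    ∀ x : Fin n → ℝ, ∃ i : Fin n, H x = x i := by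
  intro x
  by_contra! hx
  have : Nonempty (Fin n) := ⟨⟨0, hn⟩⟩
  obtain ⟨t, htx, hgap⟩ := exists_lt_forall_notMem_Ioc fun i => (hx i).symm
  set μ := empiricalMeasure x
  have hIic : μ (Iic t) = μ (Iic (H x)) := empiricalMeasure_congr x fun i =>
    ⟨fun hi => le_trans hi htx.le, fun hi => not_lt.1 fun hti => hgap i ⟨hti, hi⟩⟩
  have hatom : Measure.pi (fun _ => μ) {x} ≠ 0 := by
    simpa [Finset.prod_ne_zero_iff] using fun i => empiricalMeasure_singleton_ne_zero x i
  have hlt : Measure.pi (fun _ => μ) {y | H y ≤ t} < Measure.pi (fun _ => μ) {y | H y ≤ H x} :=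
    measure_lt_measure_of_mem_diff (fun y hy => le_trans hy htx.le)
      ⟨le_refl (H x), not_le.2 htx⟩ hatom
  have heq := hcons μ inferInstance t
  rw [hIic, ← hcons μ inferInstance (H x), toReal_eq_toReal_iff' (measure_ne_top _ _)
    (measure_ne_top _ _)] at heq
  exact hlt.ne heq

/-- Any (Borel measurable) conservative statistic satisfies the selecting property. -/
theorem conservative_implies_selecting
    (n : ℕ) (hn : 1 ≤ n) (H : (Fin n → ℝ) → ℝ) (hmeas : Measurable H) (h : ℝ → ℝ)
    (hcons : ∀ μ : Measure ℝ, IsProbabilityMeasure μ → ∀ t : ℝ,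
      ((Measure.pi fun _ : Fin n => μ) {x | H x ≤ t}).toReal = h (μ (Set.Iic t)).toReal) :
    ∀ x : Fin n → ℝ, ∃ i : Fin n, H x = x i :=
  conservative_implies_selecting_general n hn H h hcons
end

section
/- Let n ≥ 1 and let H : ℝ^n → ℝ be a selector. Then H is a conservative statistic whose module is a polynomial: there exists a polynomial h of degree at most n with h(0) = 0, h(1) = 1, h nondecreasing on [0,1], such that for every Borel probability measure μ on ℝ and every t ∈ ℝ, letting μ^n denote the n-fold product measure on ℝ^n, one has μ^n({x ∈ ℝ^n : H(x) ≤ t}) = h(μ((−∞, t])). -/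
/-!
For a selector `H`, whether `H x ≤ t` depends only on the set `S = {i | x i ≤ t}`: on the convex
set of pairs `(x, t)` with that pattern, the conditions `H x ≤ t` and `H x = x i` for some `i ∉ S`
are relatively closed, disjoint and exhaustive, so one of them holds throughout. Hence `{H ≤ t}`
is the union, over a family of patterns `S` not depending on `t`, of the cells
`{x | {i | x i ≤ t} = S}`, each of `μ^n`-measure `p ^ |S| * (1 - p) ^ (n - |S|)` with
`p = μ (-∞, t]`. Taking `μ` uniform on `[0, 1]`, where `p = t`, shows that the resulting
polynomial is monotone on `[0, 1]`.
-/

open MeasureTheory Polynomial Finset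

theorem IsPreconnected.mem_iff_mem_of_disjoint_closed {X : Type*} [TopologicalSpace X]
    {s u v : Set X} (hs : IsPreconnected s) (hu : IsClosed u) (hv : IsClosed v)
    (hsuv : s ⊆ u ∪ v) (huv : s ∩ (u ∩ v) = ∅) {x y : X} (hx : x ∈ s) (hy : y ∈ s) :
    x ∈ u ↔ y ∈ u := by
  have hnot : ∀ z ∈ s, z ∈ v → z ∉ u := fun z hz hzv hzu =>
    (Set.eq_empty_iff_forall_notMem.mp huv) z ⟨hz, hzu, hzv⟩
  rcases isPreconnected_iff_subset_of_disjoint_closed.mp hs u v hu hv hsuv huv with h | h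
  · exact iff_of_true (h hx) (h hy)
  · exact iff_of_false (hnot x hx (h hx)) (hnot y hy (h hy))

variable {ι : Type*}

structure IsSelector (H : (ι → ℝ) → ℝ) : Prop where
  continuous : Continuous H
  exists_eq_apply : ∀ x, ∃ i, H x = x i

theorem convex_setOf_setOf_le_eq (S : Set ι) :
    Convex ℝ {p : (ι → ℝ) × ℝ | {i | p.1 i ≤ p.2} = S} := by
  intro p hp q hq a b ha hb hab
  ext i
  have hpi : p.1 i ≤ p.2 ↔ i ∈ S := Set.ext_iff.mp hp i
  have hqi : q.1 i ≤ q.2 ↔ i ∈ S := Set.ext_iff.mp hq i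
  simp only [Set.mem_ofPred_eq, Prod.fst_add, Prod.snd_add, Prod.smul_fst, Prod.smul_snd,
    Pi.add_apply, Pi.smul_apply, smul_eq_mul]
  by_cases hi : i ∈ S
  · simp only [hi, iff_true] at hpi hqi ⊢
    nlinarith
  · simp only [hi, iff_false, not_le] at hpi hqi ⊢
    rcases ha.eq_or_lt with rfl | ha'
    · rw [zero_add] at hab
      subst hab
      linarith
    · nlinarith [mul_pos ha' (sub_pos.2 hpi), mul_nonneg hb (sub_pos.2 hqi).le]

noncomputable def sublevelPatterns [Fintype ι] [DecidableEq ι] (H : (ι → ℝ) → ℝ) :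
    Finset (Finset ι) :=
  {S | H (fun i => if i ∈ S then 0 else 1) ≤ 0}

namespace IsSelector

variable {H : (ι → ℝ) → ℝ}

theorem le_iff_of_setOf_le_eq [Finite ι] (hH : IsSelector H) {x y : ι → ℝ} {t u : ℝ}
    (hxy : {i | x i ≤ t} = {i | y i ≤ u}) : H x ≤ t ↔ H y ≤ u := by
  set S := {i | x i ≤ t}
  have hclosed : IsClosed (⋃ i ∈ Sᶜ, {p : (ι → ℝ) × ℝ | H p.1 = p.1 i}) :=
    (Set.toFinite _).isClosed_biUnion fun i _ =>
      isClosed_eq (hH.continuous.comp continuous_fst) ((continuous_apply i).comp continuous_fst)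
  refine (convex_setOf_setOf_le_eq S).isPreconnected.mem_iff_mem_of_disjoint_closed
    (x := (x, t)) (y := (y, u)) (isClosed_le (hH.continuous.comp continuous_fst) continuous_snd)
    hclosed ?_ ?_ rfl hxy.symm
  · rintro p (hp : {i | p.1 i ≤ p.2} = S)
    obtain ⟨i, hi⟩ := hH.exists_eq_apply p.1
    by_cases hiS : p.1 i ≤ p.2
    · exact Or.inl (hi.trans_le hiS)
    · refine Or.inr (Set.mem_biUnion (x := i) ?_ hi)
      rw [← hp]
      exact hiS
  · ext p
    simp only [Set.mem_inter_iff, Set.mem_ofPred_eq, Set.mem_iUnion, Set.mem_compl_iff,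
      exists_prop, Set.mem_empty_iff_false, iff_false, not_and]
    rintro hp hle ⟨i, hiS, hi⟩
    rw [← hp] at hiS
    exact hiS (show p.1 i ≤ p.2 from hi ▸ hle)

variable [Fintype ι] [DecidableEq ι]

theorem le_iff_mem_sublevelPatterns (hH : IsSelector H) (x : ι → ℝ) (t : ℝ) :
    H x ≤ t ↔ ({i | x i ≤ t} : Finset ι) ∈ sublevelPatterns H := by
  rw [sublevelPatterns, mem_filter, and_iff_right (mem_univ _)]
  refine hH.le_iff_of_setOf_le_eq (Set.ext fun i => ?_)
  by_cases hi : x i ≤ t <;> simp [hi]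

theorem empty_notMem_sublevelPatterns (hH : IsSelector H) : ∅ ∉ sublevelPatterns H := by
  obtain ⟨i, hi⟩ := hH.exists_eq_apply fun _ => 1
  simp [sublevelPatterns, hi]

theorem univ_mem_sublevelPatterns (hH : IsSelector H) : univ ∈ sublevelPatterns H := by
  obtain ⟨i, hi⟩ := hH.exists_eq_apply fun _ => 0
  simp [sublevelPatterns, hi]

end IsSelector

section RandomSubset

variable [Fintype ι]

noncomputable def randomSubsetPoly (F : Finset (Finset ι)) : ℝ[X] :=
  ∑ S ∈ F, X ^ #S * (1 - X) ^ (Fintype.card ι - #S)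

theorem natDegree_randomSubsetPoly_le (F : Finset (Finset ι)) :
    (randomSubsetPoly F).natDegree ≤ Fintype.card ι := by
  refine natDegree_sum_le_of_forall_le _ _ fun S _ => ?_
  have hS : #S ≤ Fintype.card ι := card_le_univ S
  calc (X ^ #S * (1 - X) ^ (Fintype.card ι - #S) : ℝ[X]).natDegree
      ≤ #S + (Fintype.card ι - #S) := by compute_degree
    _ = Fintype.card ι := by omega

theorem eval_zero_randomSubsetPoly {F : Finset (Finset ι)} (hF : ∅ ∉ F) :
    (randomSubsetPoly F).eval 0 = 0 := by
  rw [randomSubsetPoly, eval_finsetSum]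
  refine sum_eq_zero fun S hS => ?_
  have : #S ≠ 0 := card_ne_zero.mpr (nonempty_iff_ne_empty.mpr (ne_of_mem_of_not_mem hS hF))
  simp [zero_pow this]

theorem eval_one_randomSubsetPoly {F : Finset (Finset ι)} (hF : univ ∈ F) :
    (randomSubsetPoly F).eval 1 = 1 := by
  rw [randomSubsetPoly, eval_finsetSum, sum_eq_single_of_mem _ hF]
  · simp
  · intro S _ hS
    have : Fintype.card ι - #S ≠ 0 := by
      have := (card_lt_iff_ne_univ S).mpr hS
      omega
    simp [zero_pow this]

end RandomSubset

section ProductMeasure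

variable {α : Type*} [Fintype ι] [DecidableEq ι]

theorem setOf_filter_mem_eq_pi (A : Set α) [DecidablePred (· ∈ A)] (S : Finset ι) :
    {x : ι → α | ({i | x i ∈ A} : Finset ι) = S} =
      Set.univ.pi fun i => if i ∈ S then A else Aᶜ := by
  ext x
  simp only [Set.mem_ofPred_eq, Set.mem_univ_pi, Finset.ext_iff, mem_filter, mem_univ, true_and]
  refine forall_congr' fun i => ?_
  by_cases hi : i ∈ S <;> simp [hi]

variable [MeasurableSpace α]

theorem measure_pi_setOf_filter_mem_eq (μ : Measure α) [SigmaFinite μ] (A : Set α)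
    [DecidablePred (· ∈ A)] (S : Finset ι) :
    Measure.pi (fun _ : ι => μ) {x | ({i | x i ∈ A} : Finset ι) = S} =
      μ A ^ #S * μ Aᶜ ^ (Fintype.card ι - #S) := by
  rw [setOf_filter_mem_eq_pi, Measure.pi_pi]
  simp only [apply_ite μ, prod_ite, subset_univ, filter_mem_eq_of_subset, prod_const, filter_not,
    card_sdiff, card_univ, inter_univ]

theorem toReal_measure_pi_setOf_filter_mem (μ : Measure α) [IsProbabilityMeasure μ] {A : Set α}
    (hA : MeasurableSet A) [DecidablePred (· ∈ A)] (F : Finset (Finset ι)) :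
    (Measure.pi (fun _ : ι => μ) {x | ({i | x i ∈ A} : Finset ι) ∈ F}).toReal =
      (randomSubsetPoly F).eval (μ A).toReal := by
  have hunion : {x : ι → α | ({i | x i ∈ A} : Finset ι) ∈ F} =
      ⋃ S ∈ F, {x | ({i | x i ∈ A} : Finset ι) = S} := by
    ext
    simp
  have hmeas (S : Finset ι) : MeasurableSet {x : ι → α | ({i | x i ∈ A} : Finset ι) = S} := by
    rw [setOf_filter_mem_eq_pi]
    exact .univ_pi fun i => by split_ifs; exacts [hA, hA.compl]
  have hdisj : (F : Set (Finset ι)).PairwiseDisjoint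
      fun S => {x : ι → α | ({i | x i ∈ A} : Finset ι) = S} :=
    fun S _ T _ hST => Set.disjoint_left.mpr fun x hS hT => hST (hS.symm.trans hT)
  rw [hunion, measure_biUnion_finset hdisj fun S _ => hmeas S,
    ENNReal.toReal_sum fun S _ => measure_ne_top _ _, randomSubsetPoly, eval_finsetSum]
  refine sum_congr rfl fun S _ => ?_
  rw [measure_pi_setOf_filter_mem_eq, ENNReal.toReal_mul, ENNReal.toReal_pow, ENNReal.toReal_pow,
    prob_compl_eq_one_sub hA, ENNReal.toReal_sub_of_le prob_le_one ENNReal.one_ne_top]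
  simp

end ProductMeasure

instance : IsProbabilityMeasure (volume.restrict (Set.Icc (0 : ℝ) 1)) := ⟨by simp⟩

theorem toReal_volume_restrict_unitInterval_Iic {t : ℝ} (ht : t ∈ Set.Icc (0 : ℝ) 1) :
    (volume.restrict (Set.Icc (0 : ℝ) 1) (Set.Iic t)).toReal = t := by
  have hinter : Set.Iic t ∩ Set.Icc 0 1 = Set.Icc 0 t := Set.ext fun x =>
    ⟨fun ⟨hxt, hx0, _⟩ => ⟨hx0, hxt⟩, fun ⟨hx0, hxt⟩ => ⟨hxt, hx0, hxt.trans ht.2⟩⟩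
  rw [Measure.restrict_apply measurableSet_Iic, hinter, Real.volume_Icc,
    ENNReal.toReal_ofReal (by linarith [ht.1]), sub_zero]

theorem selector_is_conservative_with_polynomial_module_general
    (n : ℕ) (H : (Fin n → ℝ) → ℝ) (hcont : Continuous H)
    (hsel : ∀ x : Fin n → ℝ, ∃ i : Fin n, H x = x i) :
    ∃ h : Polynomial ℝ, h.natDegree ≤ n ∧ h.eval 0 = 0 ∧ h.eval 1 = 1 ∧
      MonotoneOn (fun t => h.eval t) (Set.Icc (0 : ℝ) 1) ∧
      ∀ μ : Measure ℝ, IsProbabilityMeasure μ → ∀ t : ℝ,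
        ((Measure.pi fun _ : Fin n => μ) {x | H x ≤ t}).toReal =
          h.eval (μ (Set.Iic t)).toReal := by
  have hH : IsSelector H := ⟨hcont, hsel⟩
  have hmodule (μ : Measure ℝ) (_ : IsProbabilityMeasure μ) (t : ℝ) :
      ((Measure.pi fun _ : Fin n => μ) {x | H x ≤ t}).toReal =
        (randomSubsetPoly (sublevelPatterns H)).eval (μ (Set.Iic t)).toReal := by
    rw [← toReal_measure_pi_setOf_filter_mem μ measurableSet_Iic]
    simp only [hH.le_iff_mem_sublevelPatterns, Set.mem_Iic]
  refine ⟨_, ?_, eval_zero_randomSubsetPoly hH.empty_notMem_sublevelPatterns,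
    eval_one_randomSubsetPoly hH.univ_mem_sublevelPatterns, ?_, hmodule⟩
  · simpa using natDegree_randomSubsetPoly_le (sublevelPatterns H)
  · intro p hp q hq hpq
    have hsub : {x : Fin n → ℝ | H x ≤ p} ⊆ {x | H x ≤ q} := fun x hx => le_trans hx hpq
    have := ENNReal.toReal_mono (measure_ne_top _ _)
      (measure_mono (μ := Measure.pi fun _ : Fin n => volume.restrict (Set.Icc (0 : ℝ) 1)) hsub)
    rwa [hmodule _ inferInstance, hmodule _ inferInstance,
      toReal_volume_restrict_unitInterval_Iic hp, toReal_volume_restrict_unitInterval_Iic hq] at this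

/-- Any selector is a conservative statistic whose module is (the restriction to `[0,1]` of)
a nondecreasing polynomial of degree at most `n` with `h(0)=0` and `h(1)=1`. -/
theorem selector_is_conservative_with_polynomial_module
    (n : ℕ) (hn : 1 ≤ n) (H : (Fin n → ℝ) → ℝ) (hcont : Continuous H)
    (hsel : ∀ x : Fin n → ℝ, ∃ i : Fin n, H x = x i) :
    ∃ h : Polynomial ℝ, h.natDegree ≤ n ∧ h.eval 0 = 0 ∧ h.eval 1 = 1 ∧
      MonotoneOn (fun t => h.eval t) (Set.Icc (0 : ℝ) 1) ∧
      ∀ μ : Measure ℝ, IsProbabilityMeasure μ → ∀ t : ℝ,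
        ((Measure.pi fun _ : Fin n => μ) {x | H x ≤ t}).toReal =
          h.eval (μ (Set.Iic t)).toReal :=
  selector_is_conservative_with_polynomial_module_general n H hcont hsel
end

section
/- Let n ≥ 1 and let H : ℝ^n → ℝ be continuous. Then H is a selector (i.e., H(x_1,…,x_n) ∈ {x_1,…,x_n} for every x ∈ ℝ^n) if and only if there exists a Sperner family S on {1,…,n} such that H = H_S. -/
open MeasureTheory

lemma selector_path_lemma {n : ℕ} {H : (Fin n → ℝ) → ℝ}
    (hcont : Continuous H) (hsel : ∀ x : Fin n → ℝ, ∃ i, H x = x i)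
    (x w : Fin n → ℝ) (hC : ∀ i j, x i < x j → w i ≤ w j) :
    ∃ c, H x = x c ∧ H w = w c := by
  set z : ℝ → Fin n → ℝ := fun s i => (1 - s) * x i + s * w i with hz
  have hzcont : Continuous fun s => H (z s) := by
    apply hcont.comp
    apply continuous_pi
    intro i
    fun_prop
  obtain ⟨c, hc⟩ := hsel (z (1/2))
  -- if midpoints agree, the whole lines agree
  have eqcl : ∀ i, z (1/2) i = z (1/2) c → x i = x c ∧ w i = w c := by
    intro i h
    simp only [hz] at h
    have hsum : x i + w i = x c + w c := by nlinarith
    rcases lt_trichotomy (x i) (x c) with h1 | h1 | h1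
    · have := hC i c h1; nlinarith
    · constructor
      · exact h1
      · nlinarith
    · have := hC c i h1; nlinarith
  -- separation on the open interval
  have sep : ∀ c', z (1/2) c' ≠ z (1/2) c → ∀ s ∈ Set.Ioo (0:ℝ) 1, z s c' ≠ z s c := by
    intro c' hne s hs heq
    apply hne
    simp only [hz] at heq ⊢
    obtain ⟨hs0, hs1⟩ := hs
    rcases lt_trichotomy (x c') (x c) with h1 | h1 | h1
    · have := hC c' c h1; nlinarith
    · have hw : w c' = w c := by nlinarith
      rw [h1, hw]
    · have := hC c c' h1; nlinarith
  set A : Set ℝ := {s | H (z s) = z s c} with hA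
  set B : Set ℝ := ⋃ c' : Fin n, {s | z (1/2) c' ≠ z (1/2) c ∧ H (z s) = z s c'} with hB
  have hAclosed : IsClosed A := isClosed_eq hzcont (by fun_prop)
  have hBclosed : IsClosed B := by
    apply isClosed_iUnion_of_finite
    intro c'
    by_cases h : z (1/2) c' = z (1/2) c
    · convert isClosed_empty using 1
      ext s
      simp only [Set.mem_setOf_eq, Set.mem_empty_iff_false, iff_false, not_and]
      intro hcontra
      exact absurd h hcontra
    · have : {s | z (1/2) c' ≠ z (1/2) c ∧ H (z s) = z s c'} = {s | H (z s) = z s c'} := by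
        ext s
        simp only [Set.mem_setOf_eq]
        exact and_iff_right h
      rw [this]
      exact isClosed_eq hzcont (by fun_prop)
  have cover : ∀ s : ℝ, s ∈ A ∪ B := by
    intro s
    obtain ⟨i, hi⟩ := hsel (z s)
    by_cases h : z (1/2) i = z (1/2) c
    · left
      obtain ⟨hx, hw⟩ := eqcl i h
      have : z s i = z s c := by simp only [hz, hx, hw]
      rw [hA]; simpa [this] using hi
    · right
      rw [hB]
      exact Set.mem_iUnion.2 ⟨i, h, hi⟩
  have disj : ∀ s ∈ Set.Ioo (0:ℝ) 1, ¬(s ∈ A ∧ s ∈ B) := by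
    rintro s hs ⟨hsA, hsB⟩
    rw [hB] at hsB
    obtain ⟨c', hc'⟩ := Set.mem_iUnion.1 hsB
    obtain ⟨hne, heq⟩ := hc'
    exact sep c' hne s hs (heq.symm.trans hsA)
  have hhalf : (1/2 : ℝ) ∈ Set.Ioo (0:ℝ) 1 := by norm_num
  have hhalfA : (1/2 : ℝ) ∈ A := hc
  have hIooA : Set.Ioo (0:ℝ) 1 ⊆ A := by
    by_contra hcon
    obtain ⟨s₀, hs₀, hs₀A⟩ := Set.not_subset.1 hcon
    have hpc := isPreconnected_Ioo (a := (0:ℝ)) (b := 1) Bᶜ Aᶜ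
      hBclosed.isOpen_compl hAclosed.isOpen_compl
      (by intro s hs
          rcases cover s with h | h
          · by_cases hB' : s ∈ B
            · exact absurd ⟨h, hB'⟩ (disj s hs)
            · exact Or.inl hB'
          · by_cases hA' : s ∈ A
            · exact absurd ⟨hA', h⟩ (disj s hs)
            · exact Or.inr hA')
      ⟨1/2, hhalf, by
        intro hmem
        rw [hB] at hmem
        obtain ⟨c', hne, heq⟩ := Set.mem_iUnion.1 hmem
        exact hne (heq.symm.trans hhalfA)⟩
      ⟨s₀, hs₀, hs₀A⟩
    obtain ⟨t, ht, htB, htA⟩ := hpc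
    rcases cover t with h | h
    · exact htA h
    · exact htB h
  have hIccA : Set.Icc (0:ℝ) 1 ⊆ A := by
    rw [← closure_Ioo (by norm_num : (0:ℝ) ≠ 1)]
    exact hAclosed.closure_subset_iff.2 hIooA
  have h0 : H (z 0) = z 0 c := hIccA ⟨le_refl 0, by norm_num⟩
  have h1 : H (z 1) = z 1 c := hIccA ⟨by norm_num, le_refl 1⟩
  refine ⟨c, ?_, ?_⟩
  · have : z 0 = x := by funext i; simp [hz]
    rwa [this] at h0
  · have : z 1 = w := by funext i; simp [hz]
    rwa [this] at h1

/-- A continuous function `H : ℝⁿ → ℝ` is a selector if and only if it is a Sperner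
statistic for some Sperner family on `{1,…,n}`. -/
theorem selector_iff_sperner_statistic
    (n : ℕ) (hn : 1 ≤ n) (H : (Fin n → ℝ) → ℝ) (hcont : Continuous H) :
    (∀ x : Fin n → ℝ, ∃ i : Fin n, H x = x i) ↔
      ∃ (S : Finset (Finset (Fin n))) (hS : S.Nonempty) (hne : ∀ A ∈ S, A.Nonempty),
        (∀ A ∈ S, ∀ B ∈ S, A ⊆ B → A = B) ∧ H = spernerStat S hS hne := by
  constructor
  · intro hsel
    classical
    -- indicator vector of a finite set
    set ind : Finset (Fin n) → (Fin n → ℝ) := fun A i => if i ∈ A then 1 else 0 with hind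
    set T : Finset (Finset (Fin n)) :=
      Finset.univ.filter (fun A => A.Nonempty ∧ H (ind A) = 1) with hT
    set S : Finset (Finset (Fin n)) :=
      T.filter (fun B => ∀ C ∈ T, C ⊆ B → C = B) with hSdef
    have hmemT : ∀ A, A ∈ T ↔ A.Nonempty ∧ H (ind A) = 1 := by
      intro A; simp [hT]
    have hST : S ⊆ T := Finset.filter_subset _ _
    have huniv : Finset.univ ∈ T := by
      rw [hmemT]
      constructor
      · exact ⟨⟨0, hn⟩, Finset.mem_univ _⟩
      · obtain ⟨i, hi⟩ := hsel (ind Finset.univ)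
        rw [hi]; simp [hind]
    -- every member of T contains a minimal member (which is in S)
    have min_exists : ∀ m (A : Finset (Fin n)), A.card ≤ m → A ∈ T → ∃ B ∈ S, B ⊆ A := by
      intro m
      induction m with
      | zero =>
        intro A hcard hA
        obtain ⟨hAne, -⟩ := (hmemT A).1 hA
        have := Finset.card_pos.2 hAne
        omega
      | succ m ih =>
        intro A hcard hA
        by_cases hmin : ∀ C ∈ T, C ⊆ A → C = A
        · exact ⟨A, Finset.mem_filter.2 ⟨hA, hmin⟩, subset_rfl⟩
        · push_neg at hmin
          obtain ⟨C, hCT, hCA, hne⟩ := hmin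
          have hss : C ⊂ A := ssubset_of_subset_of_ne hCA hne
          have : C.card ≤ m := by
            have := Finset.card_lt_card hss
            omega
          obtain ⟨B, hBS, hBC⟩ := ih C this hCT
          exact ⟨B, hBS, hBC.trans hCA⟩
    obtain ⟨B₀, hB₀S, -⟩ := min_exists _ Finset.univ le_rfl huniv
    have hS : S.Nonempty := ⟨B₀, hB₀S⟩
    have hne : ∀ A ∈ S, A.Nonempty := fun A hA => ((hmemT A).1 (hST hA)).1
    have hanti : ∀ A ∈ S, ∀ B ∈ S, A ⊆ B → A = B := by
      intro A hA B hB hAB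
      exact (Finset.mem_filter.1 hB).2 A (hST hA) hAB
    -- upward closedness of T
    have upward : ∀ A U : Finset (Fin n), A ∈ T → A ⊆ U → H (ind U) = 1 := by
      intro A U hA hAU
      obtain ⟨hAne, hA1⟩ := (hmemT A).1 hA
      have hCond : ∀ i j, ind A i < ind A j → ind U i ≤ ind U j := by
        intro i j hij
        simp only [hind] at hij ⊢
        by_cases hiA : i ∈ A
        · exfalso
          by_cases hjA : j ∈ A <;> simp [hiA, hjA] at hij <;> exact absurd hij (by norm_num)
        · by_cases hjA : j ∈ A
          · have : j ∈ U := hAU hjA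
            rw [if_pos this]
            split <;> norm_num
          · simp [hiA, hjA] at hij
      obtain ⟨c, hc1, hc2⟩ := selector_path_lemma hcont hsel (ind A) (ind U) hCond
      rw [hA1] at hc1
      have hcA : c ∈ A := by
        by_contra hcA
        simp [hind, hcA] at hc1
      have : c ∈ U := hAU hcA
      rw [hc2]; simp [hind, this]
    refine ⟨S, hS, hne, hanti, ?_⟩
    funext x
    obtain ⟨i₀, hi₀⟩ := hsel x
    set v := H x with hv
    -- Claim 1: the upper level set at v is in T
    set Astar : Finset (Fin n) := Finset.univ.filter (fun i => v ≤ x i) with hAstar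
    have hAstarT : Astar ∈ T := by
      rw [hmemT]
      constructor
      · exact ⟨i₀, by simp only [hAstar, Finset.mem_filter, Finset.mem_univ, true_and]; exact hi₀.le⟩
      · have hCond : ∀ i j, x i < x j → ind Astar i ≤ ind Astar j := by
          intro i j hij
          simp only [hind]
          by_cases hi : i ∈ Astar
          · have : j ∈ Astar := by
              simp only [hAstar, Finset.mem_filter, Finset.mem_univ, true_and] at hi ⊢
              linarith
            simp [hi, this]
          · rw [if_neg hi]
            split <;> norm_num
        obtain ⟨c, hc1, hc2⟩ := selector_path_lemma hcont hsel x (ind Astar) hCond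
        have hcA : c ∈ Astar := by
          simp only [hAstar, Finset.mem_filter, Finset.mem_univ, true_and]
          exact le_of_eq hc1
        rw [hc2]; simp [hind, hcA]
    -- Claim 2: every A ∈ S has min over A at most v
    have claim2 : ∀ A ∈ S, ∀ hA : A.Nonempty, A.inf' hA x ≤ v := by
      intro A hAS hAne
      by_contra hlt
      push_neg at hlt
      set U : Finset (Fin n) := Finset.univ.filter (fun i => v < x i) with hU
      have hAU : A ⊆ U := by
        intro i hiA
        have : A.inf' hAne x ≤ x i := Finset.inf'_le _ hiA
        simp only [hU, Finset.mem_filter, Finset.mem_univ, true_and]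
        linarith
      have hU1 : H (ind U) = 1 := upward A U (hST hAS) hAU
      have hCond : ∀ i j, x i < x j → ind U i ≤ ind U j := by
        intro i j hij
        simp only [hind]
        by_cases hi : i ∈ U
        · have : j ∈ U := by
            simp only [hU, Finset.mem_filter, Finset.mem_univ, true_and] at hi ⊢
            linarith
          simp [hi, this]
        · rw [if_neg hi]
          split <;> norm_num
      obtain ⟨c, hc1, hc2⟩ := selector_path_lemma hcont hsel x (ind U) hCond
      have hcU : c ∉ U := by
        simp only [hU, Finset.mem_filter, Finset.mem_univ, true_and, not_lt]
        exact hc1.ge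
      rw [hU1] at hc2
      simp [hind, hcU] at hc2
    -- conclude
    obtain ⟨B, hBS, hBA⟩ := min_exists _ Astar le_rfl hAstarT
    unfold spernerStat
    apply le_antisymm
    · -- v ≤ sup'
      have hBmem : (⟨B, hBS⟩ : {A // A ∈ S}) ∈ S.attach := Finset.mem_attach _ _
      refine le_trans ?_ (Finset.le_sup' _ hBmem)
      apply Finset.le_inf'
      intro i hiB
      have : i ∈ Astar := hBA hiB
      simpa [hAstar] using this
    · apply Finset.sup'_le
      rintro ⟨A, hAS⟩ -
      exact claim2 A hAS (hne A hAS)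
  · rintro ⟨S, hS, hne, -, rfl⟩
    intro x
    unfold spernerStat
    obtain ⟨A, hA, hAeq⟩ := Finset.exists_mem_eq_sup' (Finset.attach_nonempty_iff.mpr hS)
      (fun A : {A // A ∈ S} => A.1.inf' (hne A.1 A.2) x)
    obtain ⟨i, hi, hieq⟩ := Finset.exists_mem_eq_inf' (hne A.1 A.2) x
    exact ⟨i, by rw [hAeq, hieq]⟩
end

section
/- Let n ≥ 1 and let H : ℝ^n → ℝ be a selector. Then H is monotone: if x_i ≤ y_i for all i = 1, …, n, then H(x_1, …, x_n) ≤ H(y_1, …, y_n). -/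
/-!
Restricted to the segment `t ↦ x + t • (y - x)`, a selector becomes a continuous function `f`
that at every time equals one of the coordinates, each of which is a continuous nondecreasing
function of `t`. Such a continuous selection is nondecreasing: if `f` dropped just to the right of
some `t`, one coordinate would be selected at times accumulating at `t` from the right, so by
continuity it equals `f t` there, and being nondecreasing it cannot lie below `f t` later.
-/

open Filter Set Topology

section ContinuousSelection

variable {α β ι : Type*} [LinearOrder β] [TopologicalSpace β]

theorem monotone_of_continuous_of_eventually_nhdsGT_le [ConditionallyCompleteLinearOrder α]
    [TopologicalSpace α] [OrderTopology α] [DenselyOrdered α] [ClosedIciTopology β] {f : α → β}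
    (hf : Continuous f) (hloc : ∀ x, ∀ᶠ t in 𝓝[>] x, f x ≤ f t) : Monotone f := by
  intro a b hab
  have hclosed : IsClosed ({t | f a ≤ f t} ∩ Icc a b) :=
    (isClosed_Ici.preimage hf).inter isClosed_Icc
  refine hclosed.Icc_subset_of_forall_mem_nhdsWithin le_rfl (fun x hx => ?_) ⟨hab, le_rfl⟩
  filter_upwards [hloc x] with t ht using hx.1.trans ht

theorem eventually_nhdsGT_le_of_forall_exists_eq [Finite ι] [Preorder α] [TopologicalSpace α]
    [OrderClosedTopology β] {f : α → β} {g : ι → α → β} {x : α} (hf : ContinuousAt f x)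
    (hg : ∀ j, ContinuousAt (g j) x) (hg_mono : ∀ j, Monotone (g j))
    (hsel : ∀ t, ∃ j, f t = g j t) : ∀ᶠ t in 𝓝[>] x, f x ≤ f t := by
  by_contra hdrop
  have hfreq : ∃ᶠ t in 𝓝[>] x, ∃ j, f t < f x ∧ f t = g j t ∧ x < t := by
    refine ((not_eventually.1 hdrop).and_eventually self_mem_nhdsWithin).mono ?_
    rintro t ⟨hlt, hxt⟩
    obtain ⟨j, hj⟩ := hsel t
    exact ⟨j, not_le.1 hlt, hj, hxt⟩
  obtain ⟨j, hj⟩ := frequently_exists.1 hfreq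
  have hfx : f x = g j x :=
    tendsto_nhds_unique_of_frequently_eq (hf.tendsto.mono_left nhdsWithin_le_nhds)
      ((hg j).tendsto.mono_left nhdsWithin_le_nhds) (hj.mono fun t ht => ht.2.1)
  obtain ⟨t, hlt, hft, hxt⟩ := hj.exists
  exact (hfx.trans_le (hg_mono j hxt.le)).not_gt (hft ▸ hlt)

theorem monotone_of_continuous_of_forall_exists_eq [Finite ι] [ConditionallyCompleteLinearOrder α]
    [TopologicalSpace α] [OrderTopology α] [DenselyOrdered α] [OrderClosedTopology β]
    {f : α → β} {g : ι → α → β} (hf : Continuous f) (hg : ∀ j, Continuous (g j))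
    (hg_mono : ∀ j, Monotone (g j)) (hsel : ∀ t, ∃ j, f t = g j t) : Monotone f :=
  monotone_of_continuous_of_eventually_nhdsGT_le hf fun _ =>
    eventually_nhdsGT_le_of_forall_exists_eq hf.continuousAt (fun j => (hg j).continuousAt)
      hg_mono hsel

end ContinuousSelection

theorem selector_monotone_general
    (n : ℕ) (H : (Fin n → ℝ) → ℝ) (hcont : Continuous H)
    (hsel : ∀ x : Fin n → ℝ, ∃ i : Fin n, H x = x i) :
    ∀ x y : Fin n → ℝ, (∀ i, x i ≤ y i) → H x ≤ H y := by
  intro x y hxy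
  have hmono : Monotone (fun t : ℝ => H (AffineMap.lineMap x y t)) :=
    monotone_of_continuous_of_forall_exists_eq (hcont.comp AffineMap.lineMap_continuous)
      (fun j => AffineMap.lineMap_continuous) (fun j => AffineMap.lineMap_mono (hxy j))
      (fun t => (hsel _).imp fun j hj => hj.trans (AffineMap.pi_lineMap_apply x y t j))
  simpa using hmono zero_le_one

/-- Any selector is monotone. -/
theorem selector_monotone
    (n : ℕ) (hn : 1 ≤ n) (H : (Fin n → ℝ) → ℝ) (hcont : Continuous H)
    (hsel : ∀ x : Fin n → ℝ, ∃ i : Fin n, H x = x i) :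
    ∀ x y : Fin n → ℝ, (∀ i, x i ≤ y i) → H x ≤ H y :=
  selector_monotone_general n H hcont hsel
end

section
/- Let n ≥ 1 and let H : ℝ^n → ℝ be a selector. Then for every increasing homeomorphism f : ℝ → ℝ one has H(f(x_1), …, f(x_n)) = f(H(x_1, …, x_n)) for all (x_1, …, x_n) ∈ ℝ^n. In particular, H is positively homogeneous of degree 1: H(λx_1, …, λx_n) = λ H(x_1, …, x_n) for every λ > 0. -/
/-!
Deform `id` into `f` through the strictly increasing maps `fₜ y = (1 - t) y + t f(y)`,
`t ∈ [0, 1]`. If `H x = xₖ`, the selecting property puts `H (fₜ ∘ x)` on one of the curves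
`t ↦ fₜ xᵢ`; since each `fₜ` is injective, the curves with `xᵢ = xₖ` coincide with
`t ↦ fₜ xₖ` and all others never meet it. By continuity of `H` and connectedness of `[0, 1]`,
`H (fₜ ∘ x)` stays on `t ↦ fₜ xₖ`, and `t = 1` gives `H (f ∘ x) = f (H x)`.
-/

open Set

theorem strictMono_interpolate_id {𝕜 : Type*} [Ring 𝕜] [LinearOrder 𝕜] [IsStrictOrderedRing 𝕜]
    {f : 𝕜 → 𝕜} (hf : StrictMono f) {t : 𝕜} (ht : t ∈ Icc 0 1) :
    StrictMono fun y => (1 - t) * y + t * f y := by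
  rcases ht.1.eq_or_lt with rfl | ht₀
  · intro a b hab
    simpa using hab
  · exact (monotone_id.const_mul (sub_nonneg.2 ht.2)).add_strictMono (hf.const_mul ht₀)

theorem eq_of_forall_exists_eq_of_separated {X Y ι : Type*} [TopologicalSpace X]
    [PreconnectedSpace X] [TopologicalSpace Y] [T2Space Y] [Finite ι]
    {φ : X → Y} {ψ : ι → X → Y} (hφ : Continuous φ) (hψ : ∀ i, Continuous (ψ i))
    (hmem : ∀ t, ∃ i, φ t = ψ i t) (k : ι) (hsep : ∀ i, ψ i = ψ k ∨ ∀ t, ψ i t ≠ ψ k t)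
    {t₀ : X} (h₀ : φ t₀ = ψ k t₀) : φ = ψ k := by
  set J := {i | ∀ t, ψ i t ≠ ψ k t}
  have hcompl : {t | φ t = ψ k t}ᶜ = ⋃ i ∈ J, {t | φ t = ψ i t} := by
    ext t
    simp only [mem_compl_iff, mem_ofPred_eq, mem_iUnion, exists_prop]
    constructor
    · intro hne
      obtain ⟨i, hi⟩ := hmem t
      refine ⟨i, (hsep i).resolve_left fun hik => hne ?_, hi⟩
      rw [hi, hik]
    · rintro ⟨i, hiJ, hi⟩
      exact hi ▸ hiJ t
  have hclopen : IsClopen {t | φ t = ψ k t} := by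
    refine ⟨isClosed_eq hφ (hψ k), ?_⟩
    rw [← isClosed_compl_iff, hcompl]
    exact (toFinite J).isClosed_biUnion fun i _ => isClosed_eq hφ (hψ i)
  funext t
  exact (hclopen.eq_univ ⟨t₀, h₀⟩).ge (mem_univ t)

theorem selector_comp_strictMono {ι : Type*} [Finite ι] {H : (ι → ℝ) → ℝ} (hH : Continuous H)
    (hsel : ∀ x : ι → ℝ, ∃ i, H x = x i) {f : ℝ → ℝ} (hf : StrictMono f)
    (x : ι → ℝ) : H (fun i => f (x i)) = f (H x) := by
  let g : unitInterval → ℝ → ℝ := fun t y => (1 - t) * y + t * f y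
  have hg : ∀ t, StrictMono (g t) := fun t => strictMono_interpolate_id hf t.2
  obtain ⟨k, hk⟩ := hsel x
  have hfollow : (fun t => H fun i => g t (x i)) = fun t => g t (x k) := by
    refine eq_of_forall_exists_eq_of_separated (ψ := fun i t => g t (x i)) (by fun_prop)
      (fun i => by fun_prop) (fun t => hsel _) k ?_ (t₀ := 0) (by simp [g, hk])
    intro i
    by_cases hik : x i = x k
    · exact Or.inl (funext fun t => by rw [hik])
    · exact Or.inr fun t => (hg t).injective.ne hik
  simpa [g, hk] using congrFun hfollow 1

theorem selector_commutes_with_increasing_homeomorphisms_general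
    (n : ℕ) (H : (Fin n → ℝ) → ℝ) (hcont : Continuous H)
    (hsel : ∀ x : Fin n → ℝ, ∃ i : Fin n, H x = x i) :
    (∀ (f : ℝ ≃ₜ ℝ), StrictMono f → ∀ x : Fin n → ℝ,
        H (fun i => f (x i)) = f (H x)) ∧
    (∀ l : ℝ, 0 < l → ∀ x : Fin n → ℝ, H (fun i => l * x i) = l * H x) :=
  ⟨fun _ hf => selector_comp_strictMono hcont hsel hf,
    fun _ hl => selector_comp_strictMono hcont hsel (strictMono_mul_left_of_pos hl)⟩

/-- A selector commutes with every increasing homeomorphism of `ℝ`; in particular it is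
positively homogeneous of degree 1. -/
theorem selector_commutes_with_increasing_homeomorphisms
    (n : ℕ) (hn : 1 ≤ n) (H : (Fin n → ℝ) → ℝ) (hcont : Continuous H)
    (hsel : ∀ x : Fin n → ℝ, ∃ i : Fin n, H x = x i) :
    (∀ (f : ℝ ≃ₜ ℝ), StrictMono f → ∀ x : Fin n → ℝ,
        H (fun i => f (x i)) = f (H x)) ∧
    (∀ l : ℝ, 0 < l → ∀ x : Fin n → ℝ, H (fun i => l * x i) = l * H x) :=
  selector_commutes_with_increasing_homeomorphisms_general n H hcont hsel
end

section
/- Let n ≥ 1 and let H, J : ℝ^n → ℝ be two selectors. If H(ε) = J(ε) for every ε ∈ {0,1}^n, then H(x) = J(x) for every x ∈ ℝ^n. -/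
/-!
If a selector picks the coordinate `i` at a point `x` with distinct coordinates, it keeps picking
coordinate `i` along the half-open segment from `x` to any `v` ordered weakly like `x`, since the
points of that segment still have distinct coordinates; by continuity it picks `i` at `v` too.
If a second selector, agreeing with the first on the cube, picks `j` at `x`, then testing both at
the vertex `a ↦ [x i ≤ x a]` gives `x i ≤ x j`; by symmetry `x i = x j`. Points with distinct
coordinates are dense (their complement is a finite union of hyperplanes).
-/

open Set MeasureTheory

theorem ae_apply_ne_apply {ι : Type*} [Fintype ι] {a b : ι} (hab : a ≠ b) :
    ∀ᵐ x : ι → ℝ, x a ≠ x b := by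
  let diagonal : Submodule ℝ (ι → ℝ) :=
    LinearMap.ker (LinearMap.proj (R := ℝ) (φ := fun _ : ι => ℝ) a - LinearMap.proj b)
  have hdiagonal : diagonal ≠ ⊤ := by
    classical
    intro h
    have : Pi.single a (1 : ℝ) ∈ diagonal := h ▸ Submodule.mem_top
    simp [diagonal, hab.symm] at this
  refine measure_mono_null (fun x hx => ?_) (Measure.addHaar_submodule volume diagonal hdiagonal)
  simpa [diagonal, sub_eq_zero] using hx

theorem dense_setOf_injective {ι : Type*} [Fintype ι] :
    Dense {x : ι → ℝ | Function.Injective x} := by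
  refine Measure.dense_of_ae (μ := volume) ?_
  simp only [Function.Injective, ae_all_iff]
  intro a b
  by_cases hab : a = b
  · exact Filter.Eventually.of_forall fun _ _ => hab
  · filter_upwards [ae_apply_ne_apply hab] with x hx h using absurd h hx

structure IsSelector_s7 {ι : Type*} (H : (ι → ℝ) → ℝ) : Prop where
  continuous : Continuous H
  exists_eq_apply : ∀ x, ∃ i, H x = x i

namespace IsSelector_s7

variable {ι : Type*} {H : (ι → ℝ) → ℝ}

theorem isClosed_setOf_eq_apply (hH : IsSelector_s7 H) (i : ι) : IsClosed {x | H x = x i} :=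
  isClosed_eq hH.continuous (continuous_apply i)

theorem eq_apply_of_isPreconnected [Finite ι] (hH : IsSelector_s7 H) {S : Set (ι → ℝ)}
    (hS : IsPreconnected S) (hinj : ∀ y ∈ S, Function.Injective y) {x : ι → ℝ} (hx : x ∈ S)
    {i : ι} (hi : H x = x i) {y : ι → ℝ} (hy : y ∈ S) : H y = y i := by
  set other := ⋃ m ∈ ({i}ᶜ : Set ι), {z : ι → ℝ | H z = z m}
  have hother : IsClosed other :=
    (Set.toFinite _).isClosed_biUnion fun m _ => hH.isClosed_setOf_eq_apply m
  have hcover : S ⊆ {z | H z = z i} ∪ other := by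
    intro z _
    obtain ⟨m, hm⟩ := hH.exists_eq_apply z
    by_cases hmi : m = i
    · exact Or.inl (hmi ▸ hm)
    · exact Or.inr (mem_biUnion hmi hm)
  have hdisjoint : S ∩ ({z | H z = z i} ∩ other) = ∅ := by
    refine eq_empty_of_forall_notMem fun z ⟨hz, hzi, hzo⟩ => ?_
    obtain ⟨m, hmi, hzm⟩ := mem_iUnion₂.1 hzo
    exact hmi (hinj z hz ((hzm : H z = z m).symm.trans hzi))
  rcases isPreconnected_iff_subset_of_disjoint_closed.1 hS _ _ (hH.isClosed_setOf_eq_apply i)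
    hother hcover hdisjoint with hsub | hsub
  · exact hsub hy
  · exact absurd ⟨hx, hi, hsub hx⟩ (eq_empty_iff_forall_notMem.1 hdisjoint x)

theorem eq_apply_of_monotone [Finite ι] (hH : IsSelector_s7 H) {x : ι → ℝ}
    (hx : Function.Injective x) {i : ι} (hi : H x = x i) {v : ι → ℝ}
    (hv : ∀ a b, x a < x b → v a ≤ v b) : H v = v i := by
  let γ : ℝ → ι → ℝ := AffineMap.lineMap x v
  have hγ : Continuous γ := AffineMap.lineMap_continuous
  have hγ_lt : ∀ t ∈ Ico (0 : ℝ) 1, ∀ a b, x a < x b → γ t a < γ t b := by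
    intro t ⟨ht0, ht1⟩ a b hab
    simp only [γ, AffineMap.lineMap_apply_module, Pi.add_apply, Pi.smul_apply, smul_eq_mul]
    nlinarith [hv a b hab]
  have hinj : ∀ y ∈ γ '' Ico 0 1, Function.Injective y := by
    rintro _ ⟨t, ht, rfl⟩ a b hab
    by_contra hne
    rcases lt_or_gt_of_ne (hx.ne hne) with h | h
    · exact (hγ_lt t ht a b h).ne hab
    · exact (hγ_lt t ht b a h).ne' hab
  have hv_mem : v ∈ closure (γ '' Ico 0 1) := by
    simpa [γ] using map_mem_closure hγ (by simp : (1 : ℝ) ∈ closure (Ico 0 1)) (mapsTo_image γ _)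
  refine closure_minimal (fun y hy => ?_) (hH.isClosed_setOf_eq_apply i) hv_mem
  exact hH.eq_apply_of_isPreconnected (isPreconnected_Ico.image γ hγ.continuousOn) hinj
    ⟨0, by simp, by simp [γ]⟩ hi hy

theorem le_of_eq_on_boolean_cube [Finite ι] {J : (ι → ℝ) → ℝ} (hH : IsSelector_s7 H)
    (hJ : IsSelector_s7 J)
    (hcube : ∀ ε : ι → Bool, H (fun a => if ε a then 1 else 0) = J (fun a => if ε a then 1 else 0))
    {x : ι → ℝ} (hx : Function.Injective x) {i j : ι} (hi : H x = x i) (hj : J x = x j) :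
    x i ≤ x j := by
  let v : ι → ℝ := fun a => if x i ≤ x a then 1 else 0
  have hv : ∀ a b, x a < x b → v a ≤ v b := by
    intro a b hab
    simp only [v]
    split_ifs with ha hb <;> first | exact absurd (ha.trans hab.le) hb | norm_num
  have hvj : v j = v i := by
    rw [← hJ.eq_apply_of_monotone hx hj hv, ← hH.eq_apply_of_monotone hx hi hv]
    simpa using (hcube fun a => decide (x i ≤ x a)).symm
  by_contra h
  simp [v, h] at hvj

theorem eq_of_eq_on_boolean_cube_of_injective [Finite ι] {J : (ι → ℝ) → ℝ} (hH : IsSelector_s7 H)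
    (hJ : IsSelector_s7 J)
    (hcube : ∀ ε : ι → Bool, H (fun a => if ε a then 1 else 0) = J (fun a => if ε a then 1 else 0))
    {x : ι → ℝ} (hx : Function.Injective x) : H x = J x := by
  obtain ⟨i, hi⟩ := hH.exists_eq_apply x
  obtain ⟨j, hj⟩ := hJ.exists_eq_apply x
  have hij := hH.le_of_eq_on_boolean_cube hJ hcube hx hi hj
  have hji := hJ.le_of_eq_on_boolean_cube hH (fun ε => (hcube ε).symm) hx hj hi
  rw [hi, hj, le_antisymm hij hji]

end IsSelector_s7

theorem selectors_determined_on_boolean_cube_general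
    (n : ℕ) (H J : (Fin n → ℝ) → ℝ)
    (hcontH : Continuous H) (hselH : ∀ x : Fin n → ℝ, ∃ i : Fin n, H x = x i)
    (hcontJ : Continuous J) (hselJ : ∀ x : Fin n → ℝ, ∃ i : Fin n, J x = x i)
    (hcube : ∀ ε : Fin n → Bool,
      H (fun i => if ε i then 1 else 0) = J (fun i => if ε i then 1 else 0)) :
    ∀ x : Fin n → ℝ, H x = J x := by
  have hH : IsSelector_s7 H := ⟨hcontH, hselH⟩
  have hJ : IsSelector_s7 J := ⟨hcontJ, hselJ⟩
  have hHJ : H = J := hcontH.ext_on dense_setOf_injective hcontJ fun _ hx =>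
    hH.eq_of_eq_on_boolean_cube_of_injective hJ hcube hx
  exact congrFun hHJ

/-- Two selectors that coincide on the Boolean cube `{0,1}ⁿ` coincide everywhere. -/
theorem selectors_determined_on_boolean_cube
    (n : ℕ) (hn : 1 ≤ n) (H J : (Fin n → ℝ) → ℝ)
    (hcontH : Continuous H) (hselH : ∀ x : Fin n → ℝ, ∃ i : Fin n, H x = x i)
    (hcontJ : Continuous J) (hselJ : ∀ x : Fin n → ℝ, ∃ i : Fin n, J x = x i)
    (hcube : ∀ ε : Fin n → Bool,
      H (fun i => if ε i then 1 else 0) = J (fun i => if ε i then 1 else 0)) :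
    ∀ x : Fin n → ℝ, H x = J x :=
  selectors_determined_on_boolean_cube_general n H J hcontH hselH hcontJ hselJ hcube
end

section
/- Let n ≥ 1 and let H : ℝ^n → ℝ be a selector that is symmetric, i.e., H(x_{σ(1)}, …, x_{σ(n)}) = H(x_1, …, x_n) for every permutation σ of {1,…,n} and every x ∈ ℝ^n. Then H is an order statistic: there exists r ∈ {1,…,n} such that, for every x ∈ ℝ^n, H(x) equals the r-th smallest value among x_1, …, x_n (counted with multiplicity). -/
/-- A symmetric selector is an order statistic: there is an `r` such that `H x` is the
`r`-th smallest value among the coordinates of `x` (with multiplicity). -/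
theorem symmetric_selector_is_order_statistic
    (n : ℕ) (hn : 1 ≤ n) (H : (Fin n → ℝ) → ℝ) (hcont : Continuous H)
    (hsel : ∀ x : Fin n → ℝ, ∃ i : Fin n, H x = x i)
    (hsym : ∀ (σ : Equiv.Perm (Fin n)) (x : Fin n → ℝ), H (x ∘ σ) = H x) :
    ∃ r : Fin n, ∀ (x : Fin n → ℝ) (σ : Equiv.Perm (Fin n)),
      Monotone (x ∘ σ) → H x = x (σ r) := by
  have hNZ : NeZero n := ⟨by omega⟩
  set U : Set (Fin n → ℝ) := {y | StrictMono y} with hUdef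
  have hconv : Convex ℝ U := by
    intro a ha b hb s t hs ht hst
    intro i j hij
    simp only [Pi.add_apply, Pi.smul_apply, smul_eq_mul]
    by_cases hs0 : s = 0
    · have ht1 : t = 1 := by linarith
      subst hs0 ht1; simpa using hb hij
    · have hs' : 0 < s := lt_of_le_of_ne hs (Ne.symm hs0)
      have h1 := mul_lt_mul_of_pos_left (ha hij) hs'
      have h2 := mul_le_mul_of_nonneg_left (hb hij).le ht
      linarith
  have hpre : IsPreconnected U := hconv.isPreconnected
  haveI : PreconnectedSpace U := Subtype.preconnectedSpace hpre
  -- uniqueness of the selected index on U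
  have huniq : ∀ y ∈ U, ∀ i j : Fin n, H y = y i → H y = y j → i = j := by
    intro y hy i j hi hj
    exact hy.injective (by rw [← hi, ← hj])
  -- base point
  set y0 : Fin n → ℝ := fun i => (i : ℝ) with hy0def
  have hy0U : y0 ∈ U := by
    intro i j hij
    simp only [hy0def]
    exact_mod_cast hij
  obtain ⟨r, hr⟩ := hsel y0
  refine ⟨r, ?_⟩
  -- the set where H picks coordinate r, inside U
  set S : Set U := {y | H (y : Fin n → ℝ) = (y : Fin n → ℝ) r} with hSdef
  have hclosed : ∀ j : Fin n, IsClosed {y : U | H (y : Fin n → ℝ) = (y : Fin n → ℝ) j} := by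
    intro j
    exact isClosed_eq (hcont.comp continuous_subtype_val)
      ((continuous_apply j).comp continuous_subtype_val)
  have hScompl : Sᶜ = ⋃ j ∈ ({r}ᶜ : Set (Fin n)), {y : U | H (y : Fin n → ℝ) = (y : Fin n → ℝ) j} := by
    ext y
    simp only [Set.mem_compl_iff, hSdef, Set.mem_setOf_eq, Set.mem_iUnion, Set.mem_singleton_iff]
    constructor
    · intro hy
      obtain ⟨j, hj⟩ := hsel (y : Fin n → ℝ)
      exact ⟨j, fun h => hy (h ▸ hj), hj⟩
    · rintro ⟨j, hjr, hj⟩ hy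
      exact hjr (huniq _ y.2 j r hj hy)
  have hSclopen : IsClopen S := by
    constructor
    · exact hclosed r
    · rw [← isClosed_compl_iff, hScompl]
      exact Set.Finite.isClosed_biUnion (Set.toFinite _) (fun j _ => hclosed j)
  have hSuniv : S = Set.univ := hSclopen.eq_univ ⟨⟨y0, hy0U⟩, hr⟩
  have hkey : ∀ y ∈ U, H y = y r := by
    intro y hy
    have : (⟨y, hy⟩ : U) ∈ S := hSuniv ▸ Set.mem_univ _
    exact this
  -- conclude for arbitrary x via approximation
  intro x σ hmono
  set z : Fin n → ℝ := x ∘ σ with hzdef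
  have hHz : H z = H x := hsym σ x
  rw [← hHz]
  set y : ℝ → (Fin n → ℝ) := fun ε i => z i + ε * (i : ℝ) with hydef
  have hyU : ∀ ε > (0:ℝ), y ε ∈ U := by
    intro ε hε i j hij
    have h1 : z i ≤ z j := hmono hij.le
    have h2 : ε * (i : ℝ) < ε * (j : ℝ) := by
      apply mul_lt_mul_of_pos_left _ hε
      exact_mod_cast hij
    simpa [hydef] using add_lt_add_of_le_of_lt h1 h2
  have hycont : Continuous (fun ε => y ε) := by
    apply continuous_pi
    intro i
    exact continuous_const.add (continuous_id.mul continuous_const)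
  have hy0 : y 0 = z := by funext i; simp [hydef]
  have hten : Filter.Tendsto (fun ε => y ε) (nhdsWithin 0 (Set.Ioi 0)) (nhds z) := by
    have := hycont.tendsto 0
    rw [hy0] at this
    exact this.mono_left nhdsWithin_le_nhds
  have h1 : Filter.Tendsto (fun ε => H (y ε)) (nhdsWithin 0 (Set.Ioi 0)) (nhds (H z)) :=
    (hcont.tendsto z).comp hten
  have h2 : Filter.Tendsto (fun ε => y ε r) (nhdsWithin 0 (Set.Ioi 0)) (nhds (z r)) :=
    ((continuous_apply r).tendsto z).comp hten
  have heq : ∀ᶠ ε in nhdsWithin 0 (Set.Ioi 0), H (y ε) = y ε r := by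
    filter_upwards [self_mem_nhdsWithin] with ε hε
    exact hkey (y ε) (hyU ε hε)
  have h1' : Filter.Tendsto (fun ε => y ε r) (nhdsWithin 0 (Set.Ioi 0)) (nhds (H z)) :=
    h1.congr' heq
  have : H z = z r := tendsto_nhds_unique h1' h2
  simpa [hzdef] using this
end

section
/- Let n ≥ 1 and let S be a Sperner family on {1,…,n} not consisting of just one singleton, with module h_S. Then: (a) if S contains a singleton (equivalently h_S′(1) > 0), then h_S(t) < t for every t ∈ (0,1); (b) if ⋂_{A ∈ S} A ≠ ∅ (equivalently h_S′(0) > 0), then h_S(t) > t for every t ∈ (0,1). -/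
open MeasureTheory

/-!
Read `h_S(t)` as the probability that `H_S(ε) = 0` when the coordinates of `ε` are independent
and each is `0` with probability `t`; the event `H_S(ε) = 0` says that `ε` vanishes somewhere on
every member of `S`. The event `ε_j = 0` has probability `t`. If `{j} ∈ S`, the first event is
contained in the second, and strictly so since `S` has a member `B ∌ j`. If `j` lies in every
member of `S`, the second event is contained in the first, strictly since every member of `S`
has a point other than `j`. Both strict inclusions come from the Sperner property.
-/

open Finset

section Weight

variable {ι : Type*} [Fintype ι]

def bernoulliWeight (t : ℝ) (ε : ι → Bool) : ℝ :=
  ∏ i, if ε i then 1 - t else t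

lemma bernoulliWeight_pos {t : ℝ} (ht : t ∈ Set.Ioo (0 : ℝ) 1) (ε : ι → Bool) :
    0 < bernoulliWeight t ε :=
  prod_pos fun i _ => by split_ifs <;> linarith [ht.1, ht.2]

lemma bernoulliWeight_eq_pow_mul_pow (t : ℝ) (ε : ι → Bool) :
    bernoulliWeight t ε =
      t ^ #{i | ε i = false} * (1 - t) ^ (Fintype.card ι - #{i | ε i = false}) := by
  have hcard : #{i | ε i = true} = Fintype.card ι - #{i | ε i = false} := by
    have := card_filter_add_card_filter_not (s := univ) (p := fun i => ε i = true)
    simp only [card_univ, Bool.not_eq_true] at this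
    omega
  rw [bernoulliWeight, prod_ite, prod_const, prod_const, hcard, mul_comm]
  simp

lemma sum_bernoulliWeight_filter_eq_false [DecidableEq ι] (t : ℝ) (j : ι) :
    ∑ ε ∈ {ε : ι → Bool | ε j = false}, bernoulliWeight t ε = t := by
  -- Killing the factor `1 - t` at `j` turns the restricted sum into a product of sums.
  let f : ι → Bool → ℝ := fun i b => if b then (if i = j then 0 else 1 - t) else t
  have hrestrict : ∀ ε : ι → Bool,
      (if ε j = false then bernoulliWeight t ε else 0) = ∏ i, f i (ε i) := by
    intro ε
    cases hεj : ε j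
    · refine prod_congr rfl fun i _ => ?_
      by_cases hij : i = j
      · subst hij; simp [f, hεj]
      · simp [f, hij]
    · exact (prod_eq_zero (mem_univ j) (by simp [f, hεj])).symm
  rw [sum_filter, Fintype.sum_congr _ _ hrestrict, ← Fintype.prod_sum]
  simp [f, ite_add]

end Weight

section Sperner

variable {α : Type*} {S : Finset (Finset α)}

lemma exists_mem_notMem_of_singleton_mem (hsp : ∀ A ∈ S, ∀ B ∈ S, A ⊆ B → A = B) {j : α}
    (hj : {j} ∈ S) (hSj : S ≠ {{j}}) : ∃ B ∈ S, j ∉ B := by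
  by_contra! hall
  exact hSj <| eq_singleton_iff_unique_mem.mpr
    ⟨hj, fun B hB => (hsp _ hj _ hB (singleton_subset_iff.mpr (hall B hB))).symm⟩

lemma exists_mem_ne_of_forall_mem (hsp : ∀ A ∈ S, ∀ B ∈ S, A ⊆ B → A = B) {j : α}
    (hj : ∀ A ∈ S, j ∈ A) (hSj : S ≠ {{j}}) : ∀ A ∈ S, ∃ i ∈ A, i ≠ j := by
  intro A hA
  by_contra! hA_sub
  have hA_eq : A = {j} := eq_singleton_iff_unique_mem.mpr ⟨hj A hA, hA_sub⟩
  subst hA_eq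
  obtain ⟨B, hB, hjB⟩ := exists_mem_notMem_of_singleton_mem hsp hA hSj
  exact hjB (hj B hB)

end Sperner

/-- The `ε ∈ {0,1}^n` with `H_S(ε) = 0`, with `false` standing for `0`. -/
def spernerZeros {ι : Type*} [Fintype ι] [DecidableEq ι] (S : Finset (Finset ι)) :
    Finset (ι → Bool) :=
  {ε | ∀ A ∈ S, ∃ i ∈ A, ε i = false}

@[simp]
lemma mem_spernerZeros {ι : Type*} [Fintype ι] [DecidableEq ι] {S : Finset (Finset ι)}
    {ε : ι → Bool} : ε ∈ spernerZeros S ↔ ∀ A ∈ S, ∃ i ∈ A, ε i = false := by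
  simp [spernerZeros]

section Module

variable {n : ℕ} {S : Finset (Finset (Fin n))}

lemma spernerStat_indicator_eq_zero_iff (hS : S.Nonempty) (hne : ∀ A ∈ S, A.Nonempty)
    (ε : Fin n → Bool) :
    spernerStat S hS hne (fun i => if ε i then 1 else 0) = 0 ↔ ε ∈ spernerZeros S := by
  have hnonneg : 0 ≤ spernerStat S hS hne (fun i => if ε i then 1 else 0) := by
    obtain ⟨A, hA⟩ := hS
    exact le_sup'_of_le _ (mem_attach _ ⟨A, hA⟩) (le_inf' _ _ fun i _ => by split_ifs <;> norm_num)
  rw [← hnonneg.ge_iff_eq', spernerStat, sup'_le_iff]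
  have hzero (i : Fin n) : (if ε i then (1 : ℝ) else 0) ≤ 0 ↔ ε i = false := by
    cases ε i <;> norm_num
  simp [inf'_le_iff, hzero]

lemma spernerModule_eq_sum_bernoulliWeight (hS : S.Nonempty) (hne : ∀ A ∈ S, A.Nonempty)
    (t : ℝ) : spernerModule S hS hne t = ∑ ε ∈ spernerZeros S, bernoulliWeight t ε := by
  rw [spernerModule, ← univ_inter (spernerZeros S), ← sum_ite_mem]
  refine Fintype.sum_congr _ _ fun ε => ?_
  simp only [spernerStat_indicator_eq_zero_iff, bernoulliWeight_eq_pow_mul_pow, Fintype.card_fin]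

lemma spernerModule_lt_self (hS : S.Nonempty) (hne : ∀ A ∈ S, A.Nonempty)
    (hsp : ∀ A ∈ S, ∀ B ∈ S, A ⊆ B → A = B) {j : Fin n} (hj : {j} ∈ S) (hSj : S ≠ {{j}})
    {t : ℝ} (ht : t ∈ Set.Ioo (0 : ℝ) 1) : spernerModule S hS hne t < t := by
  obtain ⟨B, hB, hjB⟩ := exists_mem_notMem_of_singleton_mem hsp hj hSj
  have hsub : spernerZeros S ⊆ ({ε | ε j = false} : Finset (Fin n → Bool)) := fun ε hε => by
    obtain ⟨i, hi, hεi⟩ := mem_spernerZeros.mp hε _ hj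
    rw [mem_singleton.mp hi] at hεi
    simpa using hεi
  -- `ε` vanishing exactly at `j` misses `B`.
  have hnotMem : (fun i => decide (i ≠ j)) ∉ spernerZeros S := fun hε => by
    obtain ⟨i, hi, hεi⟩ := mem_spernerZeros.mp hε B hB
    obtain rfl : i = j := by simpa using hεi
    exact hjB hi
  calc spernerModule S hS hne t = ∑ ε ∈ spernerZeros S, bernoulliWeight t ε :=
        spernerModule_eq_sum_bernoulliWeight hS hne t
    _ < ∑ ε ∈ {ε | ε j = false}, bernoulliWeight t ε :=
        sum_lt_sum_of_subset hsub (by simp) hnotMem (bernoulliWeight_pos ht _)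
          fun ε _ _ => (bernoulliWeight_pos ht ε).le
    _ = t := sum_bernoulliWeight_filter_eq_false t j

lemma lt_spernerModule_self (hS : S.Nonempty) (hne : ∀ A ∈ S, A.Nonempty)
    (hsp : ∀ A ∈ S, ∀ B ∈ S, A ⊆ B → A = B) {j : Fin n} (hj : ∀ A ∈ S, j ∈ A)
    (hSj : S ≠ {{j}}) {t : ℝ} (ht : t ∈ Set.Ioo (0 : ℝ) 1) : t < spernerModule S hS hne t := by
  have hsub : ({ε | ε j = false} : Finset (Fin n → Bool)) ⊆ spernerZeros S := fun ε hε =>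
    mem_spernerZeros.mpr fun A hA => ⟨j, hj A hA, (mem_filter.mp hε).2⟩
  -- `ε` vanishing everywhere except at `j` meets every member of `S`.
  have hmem : (fun i => decide (i = j)) ∈ spernerZeros S :=
    mem_spernerZeros.mpr fun A hA => by
      obtain ⟨i, hi, hij⟩ := exists_mem_ne_of_forall_mem hsp hj hSj A hA
      exact ⟨i, hi, by simpa using hij⟩
  calc t = ∑ ε ∈ {ε | ε j = false}, bernoulliWeight t ε :=
        (sum_bernoulliWeight_filter_eq_false t j).symm
    _ < ∑ ε ∈ spernerZeros S, bernoulliWeight t ε :=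
        sum_lt_sum_of_subset hsub hmem (by simp) (bernoulliWeight_pos ht _)
          fun ε _ _ => (bernoulliWeight_pos ht ε).le
    _ = spernerModule S hS hne t := (spernerModule_eq_sum_bernoulliWeight hS hne t).symm

end Module

theorem sperner_module_lower_and_upper_cases_general
    (n : ℕ) (S : Finset (Finset (Fin n))) (hS : S.Nonempty)
    (hne : ∀ A ∈ S, A.Nonempty) (hsp : ∀ A ∈ S, ∀ B ∈ S, A ⊆ B → A = B)
    (hnot : ¬ ∃ i : Fin n, S = {({i} : Finset (Fin n))}) :
    ((∃ A ∈ S, A.card = 1) →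
      ∀ t ∈ Set.Ioo (0 : ℝ) 1, spernerModule S hS hne t < t) ∧
    ((S.inf' hS id).Nonempty →
      ∀ t ∈ Set.Ioo (0 : ℝ) 1, t < spernerModule S hS hne t) := by
  simp only [not_exists] at hnot
  constructor
  · rintro ⟨A, hA, hcard⟩ t ht
    obtain ⟨j, rfl⟩ := card_eq_one.mp hcard
    exact spernerModule_lt_self hS hne hsp hA (hnot j) ht
  · rintro ⟨j, hj⟩ t ht
    exact lt_spernerModule_self hS hne hsp (fun A hA => inf'_le id hA hj) (hnot j) ht

/-- For a Sperner family not consisting of just one singleton: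
(a) if `S` contains a singleton then `h_S(t) < t` on `(0,1)`;
(b) if `⋂_{A ∈ S} A ≠ ∅` then `h_S(t) > t` on `(0,1)`. -/
theorem sperner_module_lower_and_upper_cases
    (n : ℕ) (hn : 1 ≤ n) (S : Finset (Finset (Fin n))) (hS : S.Nonempty)
    (hne : ∀ A ∈ S, A.Nonempty) (hsp : ∀ A ∈ S, ∀ B ∈ S, A ⊆ B → A = B)
    (hnot : ¬ ∃ i : Fin n, S = {({i} : Finset (Fin n))}) :
    ((∃ A ∈ S, A.card = 1) →
      ∀ t ∈ Set.Ioo (0 : ℝ) 1, spernerModule S hS hne t < t) ∧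
    ((S.inf' hS id).Nonempty →
      ∀ t ∈ Set.Ioo (0 : ℝ) 1, t < spernerModule S hS hne t) :=
  sperner_module_lower_and_upper_cases_general n S hS hne hsp hnot
end

section
/- Let n ≥ 1 and let S be a Sperner family on {1,…,n} with Sperner polynomial g_S. Then g_S′(t) ≥ g_S(t)(1 − g_S(t)) / (t(1 − t)) for every t ∈ (0,1). Moreover, if equality holds at some point t* ∈ (0,1), then g_S is the identity, g_S(t) = t for all t. -/
open MeasureTheory

/- The Sperner polynomial of a Sperner family:
`g_S(t) = Σ_{ε ∈ {0,1}^n, H_S(ε)=1} t^{o(ε)} (1−t)^{n−o(ε)}`, where `o(ε)` is the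
number of coordinates of `ε` equal to `1`; equivalently `g_S(t) = 1 − h_S(1−t)`. -/
open scoped Classical in
noncomputable def spernerPoly {n : ℕ} (S : Finset (Finset (Fin n))) (hS : S.Nonempty)
    (hne : ∀ A ∈ S, A.Nonempty) (t : ℝ) : ℝ :=
  ∑ ε : Fin n → Bool,
    if spernerStat S hS hne (fun i => if ε i then 1 else 0) = 1 then
      t ^ (Finset.univ.filter fun i => ε i = true).card *
        (1 - t) ^ (n - (Finset.univ.filter fun i => ε i = true).card)
    else 0

/-! For `f ε := ∃ A ∈ S, A ⊆ {i | ε i}`, a monotone Boolean function, `g_S(t)` is the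
probability that `f` holds when the coordinates are independent Bernoulli(`t`) bits. Splitting
on the first coordinate writes `g = (1 - t) a + t b`, where `a ≤ b` are the probabilities of
the two restrictions of `f`, and the defect `t(1 - t) g' - g(1 - g)` becomes
`t(1 - t)(b - a)(1 - (b - a))` plus a convex combination of the defects of the restrictions;
so it is nonnegative by induction on `n`. If it vanishes, so does every summand: either
`b - a = 1`, and `f` is the first coordinate, or `a = b`, and then `f` ignores the first
coordinate because the probability is strictly monotone in `f`. Hence equality forces `f` to be
constant or a dictator, and `f` is not constant. -/

noncomputable def cubeWeight {n : ℕ} (t : ℝ) (ε : Fin n → Bool) : ℝ :=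
  ∏ i, if ε i then t else 1 - t

noncomputable def truthProb (n : ℕ) (f : (Fin n → Bool) → Bool) (t : ℝ) : ℝ :=
  ∑ ε, if f ε then cubeWeight t ε else 0

def headRestrict {n : ℕ} (f : (Fin (n + 1) → Bool) → Bool) (b : Bool) :
    (Fin n → Bool) → Bool :=
  fun ε => f (Fin.cons b ε)

section cubeWeight

variable {n : ℕ} {t : ℝ}

lemma cubeWeight_pos (h₀ : 0 < t) (h₁ : t < 1) (ε : Fin n → Bool) : 0 < cubeWeight t ε :=
  Finset.prod_pos fun i _ => by split <;> linarith

lemma cubeWeight_nonneg (h₀ : 0 ≤ t) (h₁ : t ≤ 1) (ε : Fin n → Bool) : 0 ≤ cubeWeight t ε :=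
  Finset.prod_nonneg fun i _ => by split <;> linarith

lemma cubeWeight_cons (b : Bool) (ε : Fin n → Bool) :
    cubeWeight t (Fin.cons b ε : Fin (n + 1) → Bool) =
      (if b then t else 1 - t) * cubeWeight t ε := by
  simp only [cubeWeight, Fin.prod_univ_succ, Fin.cons_zero, Fin.cons_succ]

lemma cubeWeight_eq_pow (ε : Fin n → Bool) :
    cubeWeight t ε = t ^ (Finset.univ.filter fun i => ε i = true).card *
      (1 - t) ^ (n - (Finset.univ.filter fun i => ε i = true).card) := by
  rw [cubeWeight, Finset.prod_ite, Finset.prod_const, Finset.prod_const,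
    Finset.filter_not, Finset.card_sdiff_of_subset (Finset.filter_subset _ _),
    Finset.card_univ, Fintype.card_fin]

end cubeWeight

section truthProb

variable {n : ℕ}

lemma truthProb_zero (f : (Fin 0 → Bool) → Bool) (t : ℝ) :
    truthProb 0 f t = if f ![] then 1 else 0 := by
  simp only [truthProb, Fintype.sum_unique, cubeWeight, Finset.univ_eq_empty, Finset.prod_empty]
  congr

lemma truthProb_succ (f : (Fin (n + 1) → Bool) → Bool) (t : ℝ) :
    truthProb (n + 1) f t =
      (1 - t) * truthProb n (headRestrict f false) t +
        t * truthProb n (headRestrict f true) t := by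
  rw [truthProb, ← (Fin.consEquiv fun _ => Bool).sum_comp, Fintype.sum_prod_type,
    Fintype.sum_bool, add_comm]
  simp only [truthProb, Finset.mul_sum, mul_ite, mul_zero]
  congr 1 <;> refine Finset.sum_congr rfl fun ε _ => ?_
  · change (if headRestrict f false ε then cubeWeight t (Fin.cons false ε) else 0) = _
    rw [cubeWeight_cons, if_neg Bool.false_ne_true]
  · change (if headRestrict f true ε then cubeWeight t (Fin.cons true ε) else 0) = _
    rw [cubeWeight_cons, if_pos rfl]

lemma differentiable_truthProb (f : (Fin n → Bool) → Bool) :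
    Differentiable ℝ (truthProb n f) :=
  Differentiable.fun_sum fun ε _ => by
    split_ifs
    · exact Differentiable.fun_finsetProd fun i _ => by split <;> fun_prop
    · fun_prop

lemma deriv_truthProb_succ (f : (Fin (n + 1) → Bool) → Bool) (t : ℝ) :
    deriv (truthProb (n + 1) f) t =
      truthProb n (headRestrict f true) t - truthProb n (headRestrict f false) t +
        (1 - t) * deriv (truthProb n (headRestrict f false)) t +
        t * deriv (truthProb n (headRestrict f true)) t := by
  have h₀ := (differentiable_truthProb (headRestrict f false) t).hasDerivAt
  have h₁ := (differentiable_truthProb (headRestrict f true) t).hasDerivAt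
  rw [funext (truthProb_succ f)]
  refine ((((hasDerivAt_id t).const_sub 1).mul h₀).add ((hasDerivAt_id t).mul h₁)).deriv.trans ?_
  simp only [id_eq]
  ring

lemma headRestrict_const (b c : Bool) :
    headRestrict (fun _ : Fin (n + 1) → Bool => b) c = fun _ => b :=
  rfl

lemma headRestrict_head (b : Bool) :
    headRestrict (fun ε : Fin (n + 1) → Bool => ε 0) b = fun _ => b :=
  funext fun _ => Fin.cons_zero _ _

lemma headRestrict_succ (j : Fin n) (b : Bool) :
    headRestrict (fun ε : Fin (n + 1) → Bool => ε j.succ) b = fun ε => ε j :=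
  funext fun _ => Fin.cons_succ _ _ _

lemma truthProb_const (b : Bool) (t : ℝ) :
    truthProb n (fun _ => b) t = if b then 1 else 0 := by
  cases b
  · simp [truthProb]
  · induction n with
    | zero => simp [truthProb_zero]
    | succ n ih => rw [truthProb_succ, headRestrict_const, headRestrict_const, ih]; ring

lemma truthProb_dictator (i : Fin n) (t : ℝ) : truthProb n (fun ε => ε i) t = t := by
  induction n with
  | zero => exact i.elim0
  | succ n ih =>
    rw [truthProb_succ]
    cases i using Fin.cases with
    | zero =>
      rw [headRestrict_head, headRestrict_head, truthProb_const, truthProb_const]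
      simp
    | succ j => rw [headRestrict_succ, headRestrict_succ, ih]; ring

variable {t : ℝ}

lemma truthProb_nonneg (f : (Fin n → Bool) → Bool) (h₀ : 0 ≤ t) (h₁ : t ≤ 1) :
    0 ≤ truthProb n f t :=
  Finset.sum_nonneg fun ε _ => by split <;> simp [cubeWeight_nonneg h₀ h₁]

lemma ite_zero_le_ite_zero {a b : Bool} (hab : a ≤ b) {x : ℝ} (hx : 0 ≤ x) :
    (if a then x else 0) ≤ if b then x else 0 := by
  by_cases ha : a
  · rw [if_pos ha, if_pos (Bool.le_iff_imp.1 hab ha)]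
  · rw [if_neg ha]
    split <;> simp [hx]

lemma truthProb_mono {f g : (Fin n → Bool) → Bool} (hfg : f ≤ g) (h₀ : 0 ≤ t) (h₁ : t ≤ 1) :
    truthProb n f t ≤ truthProb n g t :=
  Finset.sum_le_sum fun ε _ => ite_zero_le_ite_zero (hfg ε) (cubeWeight_nonneg h₀ h₁ ε)

lemma truthProb_strictMono {f g : (Fin n → Bool) → Bool} (hfg : f < g) (h₀ : 0 < t)
    (h₁ : t < 1) : truthProb n f t < truthProb n g t := by
  obtain ⟨hle, ε, hε⟩ := Pi.lt_def.mp hfg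
  obtain ⟨hfε, hgε⟩ := Bool.lt_iff.mp hε
  refine Finset.sum_lt_sum (fun ε _ => ite_zero_le_ite_zero (hle ε) (cubeWeight_pos h₀ h₁ ε).le)
    ⟨ε, Finset.mem_univ _, ?_⟩
  rw [if_pos hgε, if_neg (by simp [hfε])]
  exact cubeWeight_pos h₀ h₁ ε

lemma truthProb_le_one (f : (Fin n → Bool) → Bool) (h₀ : 0 ≤ t) (h₁ : t ≤ 1) :
    truthProb n f t ≤ 1 := by
  simpa [truthProb_const] using truthProb_mono (g := fun _ => true) (fun _ => by simp) h₀ h₁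

lemma eq_of_le_of_truthProb_eq {f g : (Fin n → Bool) → Bool} (hfg : f ≤ g) (h₀ : 0 < t)
    (h₁ : t < 1) (h : truthProb n f t = truthProb n g t) : f = g := by
  by_contra hne
  exact (truthProb_strictMono (lt_of_le_of_ne hfg hne) h₀ h₁).ne h

end truthProb

section poincare

variable {n : ℕ} {t : ℝ}

noncomputable def poincareDefect (n : ℕ) (f : (Fin n → Bool) → Bool) (t : ℝ) : ℝ :=
  t * (1 - t) * deriv (truthProb n f) t - truthProb n f t * (1 - truthProb n f t)

lemma poincareDefect_zero (f : (Fin 0 → Bool) → Bool) (t : ℝ) : poincareDefect 0 f t = 0 := by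
  rw [poincareDefect, funext (truthProb_zero f), deriv_const]
  split <;> ring

lemma poincareDefect_succ (f : (Fin (n + 1) → Bool) → Bool) (t : ℝ) :
    poincareDefect (n + 1) f t =
      t * (1 - t) * ((truthProb n (headRestrict f true) t - truthProb n (headRestrict f false) t) *
          (1 - (truthProb n (headRestrict f true) t - truthProb n (headRestrict f false) t))) +
        (1 - t) * poincareDefect n (headRestrict f false) t +
        t * poincareDefect n (headRestrict f true) t := by
  rw [poincareDefect, poincareDefect, poincareDefect, deriv_truthProb_succ, truthProb_succ]
  ring

lemma Monotone.headRestrict {f : (Fin (n + 1) → Bool) → Bool} (hf : Monotone f) (b : Bool) :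
    Monotone (headRestrict f b) :=
  fun _ _ h => hf (Fin.cons_le_cons.2 ⟨le_rfl, h⟩)

lemma headRestrict_false_le {f : (Fin (n + 1) → Bool) → Bool} (hf : Monotone f) :
    headRestrict f false ≤ headRestrict f true :=
  fun _ => hf (Fin.cons_le_cons.2 ⟨Bool.false_le _, le_rfl⟩)

lemma headRestrict_head_tail (f : (Fin (n + 1) → Bool) → Bool) (ε : Fin (n + 1) → Bool) :
    headRestrict f (ε 0) (Fin.tail ε) = f ε :=
  congrArg f (Fin.cons_self_tail ε)

lemma eq_comp_tail_of_headRestrict_eq {f : (Fin (n + 1) → Bool) → Bool}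
    (h : headRestrict f false = headRestrict f true) :
    f = fun ε => headRestrict f false (Fin.tail ε) := by
  funext ε
  rw [← headRestrict_head_tail f ε]
  cases ε 0 <;> simp only [h]

lemma eq_head_of_headRestrict_eq_const {f : (Fin (n + 1) → Bool) → Bool}
    (h₀ : headRestrict f false = fun _ => false) (h₁ : headRestrict f true = fun _ => true) :
    f = fun ε => ε 0 := by
  funext ε
  rw [← headRestrict_head_tail f ε]
  cases ε 0 <;> simp only [h₀, h₁]

lemma headRestrict_gap_nonneg {f : (Fin (n + 1) → Bool) → Bool} (hf : Monotone f)
    (h₀ : 0 ≤ t) (h₁ : t ≤ 1) :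
    0 ≤ (truthProb n (headRestrict f true) t - truthProb n (headRestrict f false) t) *
      (1 - (truthProb n (headRestrict f true) t - truthProb n (headRestrict f false) t)) := by
  have hab := truthProb_mono (headRestrict_false_le hf) h₀ h₁
  have ha := truthProb_nonneg (headRestrict f false) h₀ h₁
  have hb := truthProb_le_one (headRestrict f true) h₀ h₁
  exact mul_nonneg (by linarith) (by linarith)

lemma poincareDefect_nonneg {f : (Fin n → Bool) → Bool} (hf : Monotone f) (h₀ : 0 ≤ t)
    (h₁ : t ≤ 1) : 0 ≤ poincareDefect n f t := by
  induction n with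
  | zero => rw [poincareDefect_zero]
  | succ n ih =>
    have hgap := headRestrict_gap_nonneg hf h₀ h₁
    have hD₀ := ih (hf.headRestrict false)
    have hD₁ := ih (hf.headRestrict true)
    have ht : 0 ≤ 1 - t := sub_nonneg.2 h₁
    rw [poincareDefect_succ]
    positivity

lemma eq_const_or_dictator_of_poincareDefect_eq_zero {f : (Fin n → Bool) → Bool}
    (hf : Monotone f) (h₀ : 0 < t) (h₁ : t < 1) (h : poincareDefect n f t = 0) :
    (∃ b, f = fun _ => b) ∨ ∃ i, f = fun ε => ε i := by
  induction n with
  | zero => exact .inl ⟨f ![], funext fun ε => congrArg f (Subsingleton.elim _ _)⟩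
  | succ n ih =>
    set a := truthProb n (headRestrict f false) t
    set b := truthProb n (headRestrict f true) t
    have hgap := headRestrict_gap_nonneg hf h₀.le h₁.le
    have hD₀ := poincareDefect_nonneg (hf.headRestrict false) h₀.le h₁.le
    have hD₁ := poincareDefect_nonneg (hf.headRestrict true) h₀.le h₁.le
    have ht : 0 < t * (1 - t) := mul_pos h₀ (sub_pos.2 h₁)
    rw [poincareDefect_succ] at h
    have hgap0 : (b - a) * (1 - (b - a)) = 0 := by nlinarith
    rcases mul_eq_zero.1 hgap0 with hgap0 | hgap0
    · have hD₀0 : poincareDefect n (headRestrict f false) t = 0 := by nlinarith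
      have hf_eq := eq_comp_tail_of_headRestrict_eq
        (eq_of_le_of_truthProb_eq (headRestrict_false_le hf) h₀ h₁ (by linarith))
      rcases ih (hf.headRestrict false) hD₀0 with ⟨c, hc⟩ | ⟨j, hj⟩
      · exact .inl ⟨c, by rw [hf_eq, hc]⟩
      · exact .inr ⟨j.succ, by rw [hf_eq, hj]; rfl⟩
    · have ha : 0 ≤ a := truthProb_nonneg _ h₀.le h₁.le
      have hb : b ≤ 1 := truthProb_le_one _ h₀.le h₁.le
      refine .inr ⟨0, eq_head_of_headRestrict_eq_const ?_ ?_⟩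
      · refine (eq_of_le_of_truthProb_eq (fun _ => Bool.false_le _) h₀ h₁ ?_).symm
        rw [truthProb_const, if_neg Bool.false_ne_true]
        linarith
      · refine eq_of_le_of_truthProb_eq (fun _ => Bool.le_true _) h₀ h₁ ?_
        rw [truthProb_const, if_pos rfl]
        linarith

end poincare

section sperner

variable {n : ℕ} (S : Finset (Finset (Fin n)))

def spernerBoolFun (ε : Fin n → Bool) : Bool :=
  decide (∃ A ∈ S, ∀ i ∈ A, ε i = true)

lemma monotone_spernerBoolFun : Monotone (spernerBoolFun S) := by
  intro ε ε' h
  refine Bool.le_iff_imp.2 fun hε => ?_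
  obtain ⟨A, hA, hAε⟩ := of_decide_eq_true hε
  exact decide_eq_true ⟨A, hA, fun i hi => Bool.le_iff_imp.1 (h i) (hAε i hi)⟩

lemma spernerBoolFun_ne_const {S : Finset (Finset (Fin n))} (hS : S.Nonempty)
    (hne : ∀ A ∈ S, A.Nonempty) (b : Bool) : spernerBoolFun S ≠ fun _ => b := by
  intro h
  obtain ⟨A, hA⟩ := hS
  have htrue : spernerBoolFun S (fun _ => true) = true := decide_eq_true ⟨A, hA, fun _ _ => rfl⟩
  have hfalse : spernerBoolFun S (fun _ => false) = false :=
    decide_eq_false fun ⟨B, hB, hBε⟩ => by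
      obtain ⟨j, hj⟩ := hne B hB
      exact Bool.false_ne_true (hBε j hj)
  rw [h] at htrue hfalse
  exact Bool.false_ne_true (hfalse.symm.trans htrue)

variable {S} (hS : S.Nonempty) (hne : ∀ A ∈ S, A.Nonempty)

lemma spernerStat_indicator_eq_one_iff (ε : Fin n → Bool) :
    spernerStat S hS hne (fun i => if ε i then 1 else 0) = 1 ↔ spernerBoolFun S ε = true := by
  have hle : spernerStat S hS hne (fun i => if ε i then 1 else 0) ≤ 1 :=
    Finset.sup'_le _ _ fun A _ =>
      (Finset.inf'_le_iff _).2 ⟨_, (hne A.1 A.2).choose_spec, by split <;> norm_num⟩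
  rw [le_antisymm_iff, and_iff_right hle, spernerBoolFun, decide_eq_true_iff, spernerStat,
    Finset.le_sup'_iff]
  simp only [Finset.mem_attach, true_and, Subtype.exists, exists_prop, Finset.le_inf'_iff]
  refine exists_congr fun A => and_congr_right fun _ => forall₂_congr fun i _ => ?_
  split <;> simp [*]

lemma spernerPoly_eq_truthProb : spernerPoly S hS hne = truthProb n (spernerBoolFun S) :=
  funext fun _ => Finset.sum_congr rfl fun ε _ => by
    rw [cubeWeight_eq_pow]
    exact if_congr (spernerStat_indicator_eq_one_iff hS hne ε) rfl rfl

end sperner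

theorem spernerPoly_derivative_isoperimetric_bound_general
    (n : ℕ) (S : Finset (Finset (Fin n))) (hS : S.Nonempty)
    (hne : ∀ A ∈ S, A.Nonempty) :
    (∀ t ∈ Set.Ioo (0 : ℝ) 1,
      spernerPoly S hS hne t * (1 - spernerPoly S hS hne t) / (t * (1 - t)) ≤
        deriv (spernerPoly S hS hne) t) ∧
    (∀ ts ∈ Set.Ioo (0 : ℝ) 1,
      deriv (spernerPoly S hS hne) ts =
          spernerPoly S hS hne ts * (1 - spernerPoly S hS hne ts) / (ts * (1 - ts)) →
        ∀ t : ℝ, spernerPoly S hS hne t = t) := by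
  have hmono := monotone_spernerBoolFun S
  rw [spernerPoly_eq_truthProb hS hne]
  refine ⟨fun t ht => ?_, fun t ht heq s => ?_⟩
  · have hD := poincareDefect_nonneg hmono ht.1.le ht.2.le
    rw [poincareDefect] at hD
    rw [div_le_iff₀ (mul_pos ht.1 (sub_pos.2 ht.2))]
    linarith
  · have hD : poincareDefect n (spernerBoolFun S) t = 0 := by
      rw [poincareDefect, heq, mul_div_cancel₀ _ (mul_pos ht.1 (sub_pos.2 ht.2)).ne', sub_self]
    rcases eq_const_or_dictator_of_poincareDefect_eq_zero hmono ht.1 ht.2 hD with ⟨b, hb⟩ | ⟨i, hi⟩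
    · exact absurd hb (spernerBoolFun_ne_const hS hne b)
    · rw [hi, truthProb_dictator]

/-- Edge-isoperimetric lower bound on the derivative of a Sperner polynomial:
`g_S′(t) ≥ g_S(t)(1 − g_S(t)) / (t(1 − t))` on `(0,1)`, with equality at some point of
`(0,1)` only if `g_S` is the identity. -/
theorem spernerPoly_derivative_isoperimetric_bound
    (n : ℕ) (hn : 1 ≤ n) (S : Finset (Finset (Fin n))) (hS : S.Nonempty)
    (hne : ∀ A ∈ S, A.Nonempty) (hsp : ∀ A ∈ S, ∀ B ∈ S, A ⊆ B → A = B) :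
    (∀ t ∈ Set.Ioo (0 : ℝ) 1,
      spernerPoly S hS hne t * (1 - spernerPoly S hS hne t) / (t * (1 - t)) ≤
        deriv (spernerPoly S hS hne) t) ∧
    (∀ ts ∈ Set.Ioo (0 : ℝ) 1,
      deriv (spernerPoly S hS hne) ts =
          spernerPoly S hS hne ts * (1 - spernerPoly S hS hne ts) / (ts * (1 - ts)) →
        ∀ t : ℝ, spernerPoly S hS hne t = t) :=
  spernerPoly_derivative_isoperimetric_bound_general n S hS hne
end

section
/- Let n and r be integers with 1 < r < n. Then the module h_{r:n}(t) = Σ_{j=r}^n C(n,j) t^j (1 − t)^{n−j} of the r-th order statistic has exactly one fixed point ω_{r:n} in the open interval (0,1), and this fixed point is repellent: h_{r:n}′(ω_{r:n}) > 1. -/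
/-- The module of the `r`-th order statistic of `n` variables:
`h_{r:n}(t) = Σ_{j=r}^n C(n,j) t^j (1−t)^{n−j}`. -/
noncomputable def orderModule (n r : ℕ) (t : ℝ) : ℝ :=
  ∑ j ∈ Finset.Icc r n, (n.choose j : ℝ) * t ^ j * (1 - t) ^ (n - j)

/-!
`h_{r:n}` is a sum of Bernstein polynomials, whose derivatives telescope to
`h' = c t^(r-1) (1-t)^(n-r)` with `c > 0`. For `1 < r < n` this is strictly increasing up to the
mode `(r-1)/(n-1)`, strictly decreasing after it, and `< 1` at `0` and `1`. Since `h(0) = 0` and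
`h(1) = 1`, the function `g = h - id` cannot be strictly decreasing on `[0,1]`, so the peak of `h'`
exceeds `1`; by Darboux `h' = 1` at points `a < b`, and `g` decreases on `[0,a]`, increases on
`[a,b]` and decreases on `[b,1]`. As `g(0) = g(1) = 0`, `g` has exactly one zero in `(0,1)`; it lies
in `(a,b)`, where `h' > 1`.
-/

open Set Finset Polynomial

lemma derivative_sum_Icc_bernsteinPolynomial (R : Type*) [CommRing R] {n r : ℕ} (hrn : r ≤ n) :
    derivative (∑ j ∈ Icc (r + 1) n, bernsteinPolynomial R n j) =
      n * bernsteinPolynomial R (n - 1) r := by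
  rw [derivative_sum, ← Finset.Ico_add_one_right_eq_Icc, ← sum_Ico_add' _ r n 1]
  simp only [bernsteinPolynomial.derivative_succ, ← mul_sum]
  have htel := sum_Ico_sub (fun i => -bernsteinPolynomial R (n - 1) i) hrn
  simp only [neg_sub_neg] at htel
  rcases Nat.eq_zero_or_pos n with rfl | hn
  · simp
  · rw [htel, bernsteinPolynomial.eq_zero_of_lt R (Nat.sub_lt hn one_pos), sub_zero]

lemma orderModule_eq_eval (n r : ℕ) :
    orderModule n r = fun t => (∑ j ∈ Icc r n, bernsteinPolynomial ℝ n j).eval t := by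
  ext t
  simp [orderModule, bernsteinPolynomial, eval_finsetSum]

lemma orderModule_zero (n : ℕ) {r : ℕ} (hr : r ≠ 0) : orderModule n r 0 = 0 := by
  simp [orderModule_eq_eval, eval_finsetSum, bernsteinPolynomial.eval_at_0]
  omega

lemma orderModule_one {n r : ℕ} (hrn : r ≤ n) : orderModule n r 1 = 1 := by
  simp [orderModule_eq_eval, eval_finsetSum, bernsteinPolynomial.eval_at_1, hrn]

lemma hasDerivAt_orderModule {n r : ℕ} (hrn : r ≤ n) (t : ℝ) :
    HasDerivAt (orderModule n (r + 1))
      (n * (n - 1).choose r * (t ^ r * (1 - t) ^ (n - 1 - r))) t := by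
  rw [orderModule_eq_eval]
  refine (Polynomial.hasDerivAt _ t).congr_deriv ?_
  rw [derivative_sum_Icc_bernsteinPolynomial ℝ hrn]
  simp [bernsteinPolynomial, mul_assoc]

section Kernel

variable {c : ℝ} (hc : 0 < c) (p q : ℕ)

lemma hasDerivAt_mul_pow_mul_one_sub_pow (t : ℝ) :
    HasDerivAt (fun t : ℝ => c * (t ^ (p + 1) * (1 - t) ^ (q + 1)))
      (c * (t ^ p * (1 - t) ^ q * ((p + 1) - (p + q + 2) * t))) t := by
  have hpow := hasDerivAt_pow (p + 1) t
  have hpow_sub := (hasDerivAt_pow (q + 1) (1 - t)).comp t ((hasDerivAt_id t).const_sub 1)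
  refine ((hpow.mul hpow_sub).const_mul c).congr_deriv ?_
  simp only [Function.comp_apply, Nat.add_sub_cancel, pow_succ, Nat.cast_add, Nat.cast_one]
  ring

include hc

lemma strictMonoOn_mul_pow_mul_one_sub_pow :
    StrictMonoOn (fun t : ℝ => c * (t ^ (p + 1) * (1 - t) ^ (q + 1)))
      (Icc 0 ((p + 1) / (p + q + 2))) := by
  refine strictMonoOn_of_hasDerivWithinAt_pos (convex_Icc _ _) (by fun_prop)
    (fun t _ => (hasDerivAt_mul_pow_mul_one_sub_pow p q t).hasDerivWithinAt) ?_
  intro t ht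
  rw [interior_Icc] at ht
  obtain ⟨ht0, htm⟩ := ht
  rw [lt_div_iff₀ (by positivity)] at htm
  have ht1 : 0 < 1 - t := by nlinarith
  have : 0 < (p + 1 : ℝ) - (p + q + 2) * t := by linarith
  positivity

lemma strictAntiOn_mul_pow_mul_one_sub_pow :
    StrictAntiOn (fun t : ℝ => c * (t ^ (p + 1) * (1 - t) ^ (q + 1)))
      (Icc ((p + 1) / (p + q + 2)) 1) := by
  refine strictAntiOn_of_hasDerivWithinAt_neg (convex_Icc _ _) (by fun_prop)
    (fun t _ => (hasDerivAt_mul_pow_mul_one_sub_pow p q t).hasDerivWithinAt) ?_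
  intro t ht
  rw [interior_Icc] at ht
  obtain ⟨hmt, ht1⟩ := ht
  rw [div_lt_iff₀ (by positivity)] at hmt
  have ht0 : 0 < t := by nlinarith
  have : 0 < 1 - t := by linarith
  have : 0 < c * (t ^ p * (1 - t) ^ q) := by positivity
  nlinarith

end Kernel

lemma min_lt_of_strictMonoOn_of_strictAntiOn {f : ℝ → ℝ} {a b m t : ℝ}
    (hmono : StrictMonoOn f (Icc a m)) (hanti : StrictAntiOn f (Icc m b)) (ht : t ∈ Ioo a b) :
    min (f a) (f b) < f t := by
  rcases le_total t m with htm | hmt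
  · exact min_lt_of_left_lt <| hmono ⟨le_rfl, ht.1.le.trans htm⟩ ⟨ht.1.le, htm⟩ ht.1
  · exact min_lt_of_right_lt <| hanti ⟨hmt, ht.2.le⟩ ⟨hmt.trans ht.2.le, le_rfl⟩ ht.2

section SShaped

variable {h h' : ℝ → ℝ} (hh : ∀ t, HasDerivAt h (h' t) t)
include hh

lemma strictAntiOn_sub_id_of_deriv_lt_one {a b : ℝ} (hlt : ∀ t ∈ Ioo a b, h' t < 1) :
    StrictAntiOn (fun t => h t - t) (Icc a b) := by
  have hg t : HasDerivAt (fun t => h t - t) (h' t - 1) t := (hh t).sub (hasDerivAt_id t)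
  refine strictAntiOn_of_hasDerivWithinAt_neg (convex_Icc a b)
    (fun t _ => (hg t).continuousAt.continuousWithinAt) (fun t _ => (hg t).hasDerivWithinAt) ?_
  rw [interior_Icc]
  exact fun t ht => sub_neg.2 (hlt t ht)

lemma strictMonoOn_sub_id_of_one_lt_deriv {a b : ℝ} (hlt : ∀ t ∈ Ioo a b, 1 < h' t) :
    StrictMonoOn (fun t => h t - t) (Icc a b) := by
  have hg t : HasDerivAt (fun t => h t - t) (h' t - 1) t := (hh t).sub (hasDerivAt_id t)
  refine strictMonoOn_of_hasDerivWithinAt_pos (convex_Icc a b)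
    (fun t _ => (hg t).continuousAt.continuousWithinAt) (fun t _ => (hg t).hasDerivWithinAt) ?_
  rw [interior_Icc]
  exact fun t ht => sub_pos.2 (hlt t ht)

variable {m : ℝ} (hm : m ∈ Icc (0 : ℝ) 1)
  (hmono : StrictMonoOn h' (Icc 0 m)) (hanti : StrictAntiOn h' (Icc m 1))
include hm hmono hanti

lemma one_lt_deriv_of_strictMonoOn_of_strictAntiOn (h0 : h 0 = 0) (h1 : h 1 = 1) : 1 < h' m := by
  by_contra! hle
  have hanti01 : StrictAntiOn (fun t => h t - t) (Icc 0 1) := by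
    rw [← Icc_union_Icc_eq_Icc hm.1 hm.2]
    refine StrictAntiOn.union ?_ ?_ (isGreatest_Icc hm.1) (isLeast_Icc hm.2)
    · refine strictAntiOn_sub_id_of_deriv_lt_one hh fun t ht => ?_
      exact (hmono ⟨ht.1.le, ht.2.le⟩ ⟨hm.1, le_rfl⟩ ht.2).trans_le hle
    · refine strictAntiOn_sub_id_of_deriv_lt_one hh fun t ht => ?_
      exact (hanti ⟨le_rfl, hm.2⟩ ⟨ht.1.le, ht.2.le⟩ ht.1).trans_le hle
  have := hanti01 (left_mem_Icc.2 zero_le_one) (right_mem_Icc.2 zero_le_one) one_pos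
  simp [h0, h1] at this

theorem exists_unique_repellent_fixedPoint_of_strictMonoOn_of_strictAntiOn
    (h0 : h 0 = 0) (h1 : h 1 = 1) (h'0 : h' 0 < 1) (h'1 : h' 1 < 1) :
    ∃ ω ∈ Ioo (0 : ℝ) 1, h ω = ω ∧ 1 < h' ω ∧ ∀ ω' ∈ Ioo (0 : ℝ) 1, h ω' = ω' → ω' = ω := by
  have hpeak := one_lt_deriv_of_strictMonoOn_of_strictAntiOn hh hm hmono hanti h0 h1
  obtain ⟨a, ha, ha1⟩ : ∃ a ∈ Ioo 0 m, h' a = 1 := exists_hasDerivWithinAt_eq_of_gt_of_lt hm.1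
    (fun t _ => (hh t).hasDerivWithinAt) h'0 hpeak
  obtain ⟨b, hb, hb1⟩ : ∃ b ∈ Ioo m 1, h' b = 1 := exists_hasDerivWithinAt_eq_of_lt_of_gt hm.2
    (fun t _ => (hh t).hasDerivWithinAt) hpeak h'1
  have hbetween : ∀ t ∈ Ioo a b, 1 < h' t := fun t ht => by
    simpa [ha1, hb1] using min_lt_of_strictMonoOn_of_strictAntiOn
      (hmono.mono (Icc_subset_Icc ha.1.le le_rfl)) (hanti.mono (Icc_subset_Icc le_rfl hb.2.le)) ht
  set g := fun t => h t - t
  have hg_left : StrictAntiOn g (Icc 0 a) := strictAntiOn_sub_id_of_deriv_lt_one hh fun t ht =>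
    ha1 ▸ hmono ⟨ht.1.le, ht.2.le.trans ha.2.le⟩ ⟨ha.1.le, ha.2.le⟩ ht.2
  have hg_mid : StrictMonoOn g (Icc a b) := strictMonoOn_sub_id_of_one_lt_deriv hh hbetween
  have hg_right : StrictAntiOn g (Icc b 1) := strictAntiOn_sub_id_of_deriv_lt_one hh fun t ht =>
    hb1 ▸ hanti ⟨hb.1.le, hb.2.le⟩ ⟨hb.1.le.trans ht.1.le, ht.2.le⟩ ht.1
  have hg0 : g 0 = 0 := by simp [g, h0]
  have hg1 : g 1 = 0 := by simp [g, h1]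
  have hga : g a < 0 := hg0 ▸ hg_left ⟨le_rfl, ha.1.le⟩ ⟨ha.1.le, le_rfl⟩ ha.1
  have hgb : 0 < g b := hg1 ▸ hg_right ⟨le_rfl, hb.2.le⟩ ⟨hb.2.le, le_rfl⟩ hb.2
  have hab : a < b := ha.2.trans hb.1
  obtain ⟨ω, hω, hgω⟩ := intermediate_value_Ioo hab.le
    (fun t _ => ((hh t).continuousAt.sub continuousAt_id).continuousWithinAt) ⟨hga, hgb⟩
  refine ⟨ω, ⟨ha.1.trans hω.1, hω.2.trans hb.2⟩, sub_eq_zero.1 hgω, hbetween ω hω, ?_⟩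
  intro ω' hω' hfix
  have hgω' : g ω' = 0 := sub_eq_zero.2 hfix
  have haω' : a < ω' := lt_of_not_ge fun hle =>
    (hg_left ⟨le_rfl, hω'.1.le.trans hle⟩ ⟨hω'.1.le, hle⟩ hω'.1).ne (hgω'.trans hg0.symm)
  have hω'b : ω' < b := lt_of_not_ge fun hle =>
    (hg_right ⟨hle, hω'.2.le⟩ ⟨hle.trans hω'.2.le, le_rfl⟩ hω'.2).ne (hg1.trans hgω'.symm)
  exact hg_mid.injOn ⟨haω'.le, hω'b.le⟩ ⟨hω.1.le, hω.2.le⟩ (hgω'.trans hgω.symm)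

end SShaped

/-- For `1 < r < n`, the module `h_{r:n}` of the `r`-th order statistic has exactly one
fixed point in `(0,1)`, which is repellent: `h_{r:n}′(ω) > 1`. -/
theorem orderModule_unique_repellent_fixed_point
    (n r : ℕ) (hr : 1 < r) (hrn : r < n) :
    ∃ ω ∈ Set.Ioo (0 : ℝ) 1, orderModule n r ω = ω ∧
      1 < deriv (orderModule n r) ω ∧
      ∀ ω' ∈ Set.Ioo (0 : ℝ) 1, orderModule n r ω' = ω' → ω' = ω := by
  obtain ⟨p, rfl⟩ : ∃ p, r = p + 2 := ⟨r - 2, by omega⟩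
  obtain ⟨q, rfl⟩ : ∃ q, n = p + q + 3 := ⟨n - p - 3, by omega⟩
  set c : ℝ := (p + q + 3 : ℕ) * (p + q + 2).choose (p + 1)
  have hc : 0 < c := by positivity [Nat.choose_pos (by omega : p + 1 ≤ p + q + 2)]
  have hderiv t : HasDerivAt (orderModule (p + q + 3) (p + 2))
      (c * (t ^ (p + 1) * (1 - t) ^ (q + 1))) t := by
    refine (hasDerivAt_orderModule (n := p + q + 3) (r := p + 1) (by omega) t).congr_deriv ?_
    rw [show p + q + 3 - 1 - (p + 1) = q + 1 by omega]
    rfl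
  have hm : (p + 1 : ℝ) / (p + q + 2) ∈ Icc (0 : ℝ) 1 :=
    ⟨by positivity, (div_le_one (by positivity)).2 (by linarith)⟩
  obtain ⟨ω, hω, hfix, hrep, huniq⟩ :=
    exists_unique_repellent_fixedPoint_of_strictMonoOn_of_strictAntiOn hderiv hm
      (strictMonoOn_mul_pow_mul_one_sub_pow hc p q) (strictAntiOn_mul_pow_mul_one_sub_pow hc p q)
      (orderModule_zero _ (by omega)) (orderModule_one (by omega)) (by simp) (by simp)
  exact ⟨ω, hω, hfix, (hderiv ω).deriv ▸ hrep, huniq⟩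
end
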